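/- arXiv:1807.02766 — 2 statements merged into one kernel-verified Lean document; each statement's English description precedes it below -/
import Mathlib

section
/- Let σ,υ ∈ I_{n,k} with 2k < n, and let σ̂ = σ(max σ⁰, n+1) and υ̂ = υ(max υ⁰, n+1) be their (0,1)-maximal completions in I_{n+1,k+1}. Then: (a) υ ≤ σ if and only if υ̂ ≤ σ̂; (b) if υ ≤ σ, then b(υ̂)+c(υ̂) − (b(σ̂)+c(σ̂)) = b(υ)+c(υ) − (b(σ)+c(σ)) and a_{σ̂,υ̂} − p_{σ̂} = a_{σ,υ} − p_σ; (c) consequently Sing(σ̂) is exactly the set of (0,1)-maximal completions of the elements of Sing(σ). -/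
/- Link patterns: an involution in `I_{n,k}` (k disjoint 2-cycles in S_n) is identified
with its set of arcs, a finset of pairs `(i,j)` with `1 ≤ i < j ≤ n`, pairwise disjoint
endpoints, of cardinality `k`. -/

attribute [local instance] Classical.propDecidable

namespace LinkPatterns

/-- `σ` is a link pattern on the points `1,…,n`: each arc `(i,j)` satisfies
`1 ≤ i < j ≤ n` and distinct arcs have pairwise distinct endpoints. -/
def IsLinkPattern (n : ℕ) (σ : Finset (ℕ × ℕ)) : Prop :=
  (∀ p ∈ σ, 1 ≤ p.1 ∧ p.1 < p.2 ∧ p.2 ≤ n) ∧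
  (∀ p ∈ σ, ∀ q ∈ σ, p ≠ q → p.1 ≠ q.1 ∧ p.1 ≠ q.2 ∧ p.2 ≠ q.1 ∧ p.2 ≠ q.2)

/-- The fixed points `σ⁰` of a link pattern on `1,…,n`. -/
noncomputable def fixedPts (n : ℕ) (σ : Finset (ℕ × ℕ)) : Finset ℕ :=
  (Finset.Icc 1 n).filter (fun f => ∀ p ∈ σ, p.1 ≠ f ∧ p.2 ≠ f)

/-- `c(σ)`: the number of crossings, i.e. of pairs of arcs `(i,j),(i',j')` with
`i < i' < j < j'`. -/
noncomputable def crossings (σ : Finset (ℕ × ℕ)) : ℕ :=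
  ((σ ×ˢ σ).filter (fun q => q.1.1 < q.2.1 ∧ q.2.1 < q.1.2 ∧ q.1.2 < q.2.2)).card

/-- `b(σ)`: the number of pairs (arc, fixed point) with the fixed point strictly
under the arc. -/
noncomputable def bridges (n : ℕ) (σ : Finset (ℕ × ℕ)) : ℕ :=
  ((σ ×ˢ fixedPts n σ).filter (fun q => q.1.1 < q.2 ∧ q.2 < q.1.2)).card

/-- `R_{[a,b]}(σ)`: the number of arcs `(i,j) ∈ σ` with `a ≤ i < j ≤ b`. -/
noncomputable def RInt (σ : Finset (ℕ × ℕ)) (a b : ℕ) : ℕ :=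
  (σ.filter (fun p => a ≤ p.1 ∧ p.2 ≤ b)).card

/-- The partial order: `υ ≤ σ` iff `R_{[a,b]}(υ) ≤ R_{[a,b]}(σ)` for all `1 ≤ a < b ≤ n`. -/
def lpLE (n : ℕ) (υ σ : Finset (ℕ × ℕ)) : Prop :=
  ∀ a b : ℕ, 1 ≤ a → a < b → b ≤ n → RInt υ a b ≤ RInt σ a b

/-- `σ'` is a predecessor of `σ`, i.e. is obtained from `σ` by an elementary move
forward (of first or second type). -/
def IsPredecessor (n : ℕ) (σ' σ : Finset (ℕ × ℕ)) : Prop :=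
  (∃ i j f : ℕ, (i, j) ∈ σ ∧ f ∈ fixedPts n σ ∧ i < f ∧ f < j ∧
    (σ' = insert (i, f) (σ.erase (i, j)) ∨ σ' = insert (f, j) (σ.erase (i, j)))) ∨
  (∃ i j l m : ℕ, (i, j) ∈ σ ∧ (l, m) ∈ σ ∧ i < l ∧ l < j ∧ j < m ∧
    (σ' = insert (i, l) (insert (j, m) ((σ.erase (i, j)).erase (l, m))) ∨
     σ' = insert (i, m) (insert (l, j) ((σ.erase (i, j)).erase (l, m)))))

/-- All finsets of pairs of points of `1,…,n`: an ambient finite set in which all link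
patterns on `1,…,n` live. -/
noncomputable def allSub (n : ℕ) : Finset (Finset (ℕ × ℕ)) :=
  (Finset.Icc 1 n ×ˢ Finset.Icc 1 n).powerset

/-- `a_{σ,υ}`: the number of `ω ∈ I_{n,k}` with `ω ≤ σ` such that `ω` is a predecessor
of `υ` or `υ` is a predecessor of `ω` (the number of edges at `υ` in the graph `G_σ`). -/
noncomputable def aNum (n k : ℕ) (σ υ : Finset (ℕ × ℕ)) : ℕ :=
  ((allSub n).filter (fun ω => IsLinkPattern n ω ∧ ω.card = k ∧ lpLE n ω σ ∧
    (IsPredecessor n ω υ ∨ IsPredecessor n υ ω))).card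

/-- `p_σ := C(n-k,2) - C(n-2k,2) - b(σ) - c(σ)`. -/
noncomputable def pNum (n k : ℕ) (σ : Finset (ℕ × ℕ)) : ℕ :=
  Nat.choose (n - k) 2 - Nat.choose (n - 2 * k) 2 - bridges n σ - crossings σ

/-- `σ ∈ I_{n,k}^max`: a link pattern with no crossings and no fixed point under an arc. -/
def IsMaximal (n : ℕ) (σ : Finset (ℕ × ℕ)) : Prop :=
  IsLinkPattern n σ ∧ bridges n σ = 0 ∧ crossings σ = 0

/-- `υ` is a singular point of `σ`: `a_{σ,υ} > p_σ`. -/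
def IsSingularPt (n k : ℕ) (σ υ : Finset (ℕ × ℕ)) : Prop :=
  pNum n k σ < aNum n k σ υ

/-- `υ ∈ Sing(σ)`: `υ ∈ I_{n,k}`, `υ ≤ σ`, `υ` is a singular point of `σ`, and `υ` is
maximal w.r.t. `≤` among the singular points of `σ`. -/
def InSing (n k : ℕ) (σ υ : Finset (ℕ × ℕ)) : Prop :=
  IsLinkPattern n υ ∧ υ.card = k ∧ lpLE n υ σ ∧ IsSingularPt n k σ υ ∧
  ∀ ω : Finset (ℕ × ℕ), IsLinkPattern n ω → ω.card = k → lpLE n ω σ →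
    IsSingularPt n k σ ω → lpLE n υ ω → ω = υ

/-- `τ*(σ)`: the set of minimal arcs `(i,i+1)` of `σ`. -/
noncomputable def tauStar (σ : Finset (ℕ × ℕ)) : Finset (ℕ × ℕ) :=
  σ.filter (fun p => p.2 = p.1 + 1)

/-- `ρ(σ)` for `σ ∈ I_{n,k}^max`. -/
noncomputable def rho (n : ℕ) (σ : Finset (ℕ × ℕ)) : ℕ :=
  if 1 ∈ fixedPts n σ ∧ n ∈ fixedPts n σ then (tauStar σ).card + 2
  else if 1 ∈ fixedPts n σ ∨ n ∈ fixedPts n σ ∨ (1, n) ∈ σ then (tauStar σ).card + 1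
  else (tauStar σ).card

/-- The extraction `σ̃^{(i,i+1)}`: delete the arc `(i,i+1)` together with the points
`i, i+1` and renumber the remaining points. -/
noncomputable def extract (i : ℕ) (σ : Finset (ℕ × ℕ)) : Finset (ℕ × ℕ) :=
  (σ.erase (i, i + 1)).image
    (fun p => (if p.1 < i then p.1 else p.1 - 2, if p.2 < i then p.2 else p.2 - 2))

/-- `σ₊ₐ`: shift every point of `σ` by `a`. -/
noncomputable def shiftBy (a : ℕ) (σ : Finset (ℕ × ℕ)) : Finset (ℕ × ℕ) :=
  σ.image (fun p => (p.1 + a, p.2 + a))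

/-- The projection `π_{a,b}(σ)` renumbered to a link pattern on `1,…,b-a+1`. -/
noncomputable def proj (a b : ℕ) (σ : Finset (ℕ × ℕ)) : Finset (ℕ × ℕ) :=
  (σ.filter (fun p => a ≤ p.1 ∧ p.2 ≤ b)).image
    (fun p => (p.1 - (a - 1), p.2 - (a - 1)))

/-- The arc `p` lies over the arc `(i,j)`: `p.1 < i < j < p.2`. -/
def ArcOver (p : ℕ × ℕ) (i j : ℕ) : Prop := p.1 < i ∧ j < p.2

/-- The pair of arcs `(i,j),(i',j')` of `σ` is admissible at `[1,n]`. -/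
def AdmissiblePair (n : ℕ) (σ : Finset (ℕ × ℕ)) (i j i' j' : ℕ) : Prop :=
  (i, j) ∈ σ ∧ (i', j') ∈ σ ∧
  1 < i ∧ i < j ∧ j < i' ∧ i' < j' ∧ j' < n ∧
  1 ∈ fixedPts n σ ∧ n ∈ fixedPts n σ ∧
  (∀ f ∈ fixedPts n σ, f ≠ 1 → f ≠ n → j ≤ f ∧ f ≤ i') ∧
  (∀ p ∈ σ, ¬(p.1 < i ∧ i < p.2 ∧ p.2 < j) ∧ ¬(i < p.1 ∧ p.1 < j ∧ j < p.2) ∧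
            ¬(p.1 < i' ∧ i' < p.2 ∧ p.2 < j') ∧ ¬(i' < p.1 ∧ p.1 < j' ∧ j' < p.2)) ∧
  (∀ p ∈ σ, (ArcOver p i j ∨ ArcOver p i' j') → (p.1 < i ∧ j' < p.2)) ∧
  (∀ p ∈ σ, ∀ q ∈ σ, (p.1 < i ∧ j' < p.2) → (q.1 < i ∧ j' < q.2) →
      p.1 < q.1 → q.2 < p.2) ∧
  ((fixedPts n σ).filter (fun f => j ≤ f ∧ f ≤ i')).card *
    (σ.filter (fun p => p.1 < i ∧ j' < p.2)).card = 0

/-! ### basics -/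

noncomputable def pts (τ : Finset (ℕ × ℕ)) : Finset ℕ := τ.biUnion (fun p => {p.1, p.2})

lemma mem_pts {τ : Finset (ℕ × ℕ)} {y : ℕ} :
    y ∈ pts τ ↔ ∃ p ∈ τ, p.1 = y ∨ p.2 = y := by
  simp [pts, Finset.mem_biUnion, or_comm, eq_comm]

lemma mem_fixedPts {n : ℕ} {τ : Finset (ℕ × ℕ)} {x : ℕ} :
    x ∈ fixedPts n τ ↔ (1 ≤ x ∧ x ≤ n) ∧ x ∉ pts τ := by
  simp only [fixedPts, Finset.mem_filter, Finset.mem_Icc, mem_pts]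
  constructor
  · rintro ⟨⟨h1, h2⟩, h3⟩
    refine ⟨⟨h1, h2⟩, ?_⟩
    rintro ⟨p, hp, h | h⟩
    · exact (h3 p hp).1 h
    · exact (h3 p hp).2 h
  · rintro ⟨⟨h1, h2⟩, h3⟩
    refine ⟨⟨h1, h2⟩, fun p hp => ⟨fun h => h3 ⟨p, hp, Or.inl h⟩, fun h => h3 ⟨p, hp, Or.inr h⟩⟩⟩


lemma lp_pts_disj {n : ℕ} {τ : Finset (ℕ × ℕ)} (hτ : IsLinkPattern n τ) :
    ∀ p ∈ τ, ∀ q ∈ τ, p ≠ q → Disjoint ({p.1, p.2} : Finset ℕ) {q.1, q.2} := by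
  intro p hp q hq hpq
  obtain ⟨a1, a2, a3, a4⟩ := hτ.2 p hp q hq hpq
  simp only [Finset.disjoint_left, Finset.mem_insert, Finset.mem_singleton]
  rintro x (rfl | rfl) <;> rintro (h | h) <;> simp_all

/-- interval counting identity -/
lemma interval_identity {n : ℕ} {τ : Finset (ℕ × ℕ)} (hτ : IsLinkPattern n τ)
    {a : ℕ} (ha : 1 ≤ a) (han : a ≤ n + 1) :
    RInt τ a n + ((fixedPts n τ).filter (fun f => a ≤ f)).card + τ.card + a
      = (n + 1) + RInt τ 1 (a - 1) := by
  classical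
  have hIcard : (Finset.Icc a n).card = n + 1 - a := Nat.card_Icc a n
  -- partition Icc a n into points and fixed points
  have hsplit : (Finset.Icc a n).card
      = ((Finset.Icc a n).filter (fun y => y ∈ pts τ)).card
        + ((Finset.Icc a n).filter (fun y => y ∉ pts τ)).card :=
    (Finset.card_filter_add_card_filter_not _).symm
  -- the non-points part is the fixed points ≥ a
  have hfix : (Finset.Icc a n).filter (fun y => y ∉ pts τ)
      = (fixedPts n τ).filter (fun f => a ≤ f) := by
    ext y
    simp only [Finset.mem_filter, Finset.mem_Icc, mem_fixedPts]
    constructor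
    · rintro ⟨⟨h1, h2⟩, h3⟩; exact ⟨⟨⟨le_trans ha h1, h2⟩, h3⟩, h1⟩
    · rintro ⟨⟨⟨h1, h2⟩, h3⟩, h4⟩; exact ⟨⟨h4, h2⟩, h3⟩
  -- the points part
  have hptsEq : (Finset.Icc a n).filter (fun y => y ∈ pts τ)
      = τ.biUnion (fun p => ({p.1, p.2} : Finset ℕ).filter (fun y => a ≤ y)) := by
    ext y
    simp only [Finset.mem_filter, Finset.mem_Icc, Finset.mem_biUnion, Finset.mem_insert,
      Finset.mem_singleton]
    constructor
    · rintro ⟨⟨h1, h2⟩, h3⟩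
      rw [mem_pts] at h3
      obtain ⟨p, hp, h | h⟩ := h3
      · exact ⟨p, hp, Or.inl h.symm, h1⟩
      · exact ⟨p, hp, Or.inr h.symm, h1⟩
    · rintro ⟨p, hp, (rfl | rfl), h4⟩
      · exact ⟨⟨h4, le_of_lt (lt_of_lt_of_le (hτ.1 p hp).2.1 (hτ.1 p hp).2.2)⟩,
          mem_pts.2 ⟨p, hp, Or.inl rfl⟩⟩
      · exact ⟨⟨h4, (hτ.1 p hp).2.2⟩, mem_pts.2 ⟨p, hp, Or.inr rfl⟩⟩
  have hcardBi : ((Finset.Icc a n).filter (fun y => y ∈ pts τ)).card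
      = ∑ p ∈ τ, (({p.1, p.2} : Finset ℕ).filter (fun y => a ≤ y)).card := by
    rw [hptsEq]
    exact Finset.card_biUnion (fun p hp q hq hpq =>
      Finset.disjoint_filter_filter (lp_pts_disj hτ p hp q hq hpq))
  -- split τ into three classes
  have hsum : ∑ p ∈ τ, (({p.1, p.2} : Finset ℕ).filter (fun y => a ≤ y)).card
      = 2 * (τ.filter (fun p => a ≤ p.1)).card
        + (τ.filter (fun p => ¬ a ≤ p.1 ∧ a ≤ p.2)).card := by
    have h1 : ∀ p ∈ τ.filter (fun p => a ≤ p.1),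
        (({p.1, p.2} : Finset ℕ).filter (fun y => a ≤ y)).card = 2 := by
      intro p hp
      rw [Finset.mem_filter] at hp
      have hne : p.1 ≠ p.2 := ne_of_lt (hτ.1 p hp.1).2.1
      have : ({p.1, p.2} : Finset ℕ).filter (fun y => a ≤ y) = {p.1, p.2} := by
        apply Finset.filter_true_of_mem
        intro y hy
        simp only [Finset.mem_insert, Finset.mem_singleton] at hy
        rcases hy with rfl | rfl
        · exact hp.2
        · exact le_trans hp.2 (le_of_lt (hτ.1 p hp.1).2.1)
      rw [this, Finset.card_insert_of_notMem (by simpa using hne), Finset.card_singleton]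
    have h2 : ∀ p ∈ τ.filter (fun p => ¬ a ≤ p.1 ∧ a ≤ p.2),
        (({p.1, p.2} : Finset ℕ).filter (fun y => a ≤ y)).card = 1 := by
      intro p hp
      rw [Finset.mem_filter] at hp
      have : ({p.1, p.2} : Finset ℕ).filter (fun y => a ≤ y) = {p.2} := by
        ext y
        simp only [Finset.mem_filter, Finset.mem_insert, Finset.mem_singleton]
        constructor
        · rintro ⟨rfl | rfl, h⟩
          · exact absurd h hp.2.1
          · rfl
        · rintro rfl; exact ⟨Or.inr rfl, hp.2.2⟩
      rw [this, Finset.card_singleton]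
    have h3 : ∀ p ∈ τ.filter (fun p => ¬ a ≤ p.1 ∧ ¬ a ≤ p.2),
        (({p.1, p.2} : Finset ℕ).filter (fun y => a ≤ y)).card = 0 := by
      intro p hp
      rw [Finset.mem_filter] at hp
      rw [Finset.card_eq_zero, Finset.filter_eq_empty_iff]
      intro y hy
      simp only [Finset.mem_insert, Finset.mem_singleton] at hy
      rcases hy with rfl | rfl
      · exact hp.2.1
      · exact hp.2.2
    rw [← Finset.sum_filter_add_sum_filter_not τ (fun p => a ≤ p.1)]
    rw [← Finset.sum_filter_add_sum_filter_not (τ.filter (fun p => ¬ a ≤ p.1)) (fun p => a ≤ p.2)]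
    rw [Finset.sum_congr rfl h1, Finset.filter_filter, Finset.filter_filter]
    rw [Finset.sum_congr rfl h2, Finset.sum_congr rfl h3]
    simp only [Finset.sum_const, smul_eq_mul, mul_one, mul_zero, add_zero]
    omega
  -- identify filters with RInt
  have hin : (τ.filter (fun p => a ≤ p.1)).card = RInt τ a n := by
    unfold RInt
    congr 1
    apply Finset.filter_congr
    intro p hp
    simp only [iff_self_and]
    exact fun _ => (hτ.1 p hp).2.2
  have hbl : (τ.filter (fun p => ¬ a ≤ p.1 ∧ ¬ a ≤ p.2)).card = RInt τ 1 (a - 1) := by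
    unfold RInt
    congr 1
    apply Finset.filter_congr
    intro p hp
    have h1 := (hτ.1 p hp).1
    have h0 : p.1 < p.2 := (hτ.1 p hp).2.1
    constructor
    · rintro ⟨h2, h3⟩; exact ⟨h1, by omega⟩
    · rintro ⟨h2, h3⟩; omega
  -- three-way split of card τ
  have htot : τ.card = (τ.filter (fun p => a ≤ p.1)).card
      + ((τ.filter (fun p => ¬ a ≤ p.1 ∧ a ≤ p.2)).card
        + (τ.filter (fun p => ¬ a ≤ p.1 ∧ ¬ a ≤ p.2)).card) := by
    rw [← Finset.card_filter_add_card_filter_not (s := τ) (p := fun p => a ≤ p.1)]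
    congr 1
    rw [← Finset.card_filter_add_card_filter_not
      (s := τ.filter (fun p => ¬ a ≤ p.1)) (p := fun p => a ≤ p.2), Finset.filter_filter,
      Finset.filter_filter]
  rw [hfix, hcardBi, hsum, hin, hIcard] at hsplit
  rw [hin, hbl] at htot
  omega


/-! ### RInt lemmas -/

lemma RInt_eq_zero' {τ : Finset (ℕ × ℕ)} (h : ∀ p ∈ τ, p.1 < p.2) {a b : ℕ} (hba : b ≤ a) :
    RInt τ a b = 0 := by
  rw [RInt, Finset.card_eq_zero, Finset.filter_eq_empty_iff]
  rintro p hp ⟨h1, h2⟩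
  exact absurd (h p hp) (by omega)

lemma RInt_congr_top {τ : Finset (ℕ × ℕ)} {n : ℕ} (hb : ∀ p ∈ τ, p.2 ≤ n) {a b : ℕ}
    (hbn : n ≤ b) : RInt τ a b = RInt τ a n := by
  unfold RInt
  congr 1
  apply Finset.filter_congr
  intro p hp
  have := hb p hp
  constructor <;> rintro ⟨h1, h2⟩ <;> exact ⟨h1, by omega⟩

lemma RInt_insert_hat {τ : Finset (ℕ × ℕ)} {n u : ℕ} (hb : ∀ p ∈ τ, p.2 ≤ n) {a b : ℕ}
    (hbn : b ≤ n) : RInt (insert (u, n + 1) τ) a b = RInt τ a b := by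
  unfold RInt
  rw [Finset.filter_insert, if_neg (by simp; omega)]

lemma hat_notMem {τ : Finset (ℕ × ℕ)} {n u : ℕ} (hb : ∀ p ∈ τ, p.2 ≤ n) :
    (u, n + 1) ∉ τ := fun h => by have := hb _ h; simp at this

lemma RInt_insert_top {τ : Finset (ℕ × ℕ)} {n u : ℕ} (hb : ∀ p ∈ τ, p.2 ≤ n) {a : ℕ} :
    RInt (insert (u, n + 1) τ) a (n + 1) = RInt τ a n + if a ≤ u then 1 else 0 := by
  unfold RInt
  have he : τ.filter (fun p => a ≤ p.1 ∧ p.2 ≤ n + 1)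
      = τ.filter (fun p => a ≤ p.1 ∧ p.2 ≤ n) := by
    apply Finset.filter_congr
    intro p hp
    have := hb p hp
    constructor <;> rintro ⟨h1, h2⟩ <;> exact ⟨h1, by omega⟩
  rw [Finset.filter_insert]
  by_cases hau : a ≤ u
  · rw [if_pos (by simpa using hau), Finset.card_insert_of_notMem
      (fun h => hat_notMem hb (Finset.mem_of_mem_filter _ h)), if_pos hau, he]
  · rw [if_neg (by simpa using hau), if_neg hau, add_zero, he]

/-! ### hat lemmas -/

lemma lp_snd_le {n : ℕ} {τ : Finset (ℕ × ℕ)} (hτ : IsLinkPattern n τ) :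
    ∀ p ∈ τ, p.2 ≤ n := fun p hp => (hτ.1 p hp).2.2

lemma hat_isLP {n : ℕ} {τ : Finset (ℕ × ℕ)} {u : ℕ} (hτ : IsLinkPattern n τ)
    (hu : u ∈ fixedPts n τ) : IsLinkPattern (n + 1) (insert (u, n + 1) τ) := by
  obtain ⟨⟨hu1, hu2⟩, hu3⟩ := mem_fixedPts.1 hu
  constructor
  · intro p hp
    rcases Finset.mem_insert.1 hp with rfl | hp
    · exact ⟨hu1, by omega, le_refl _⟩
    · have := hτ.1 p hp; exact ⟨this.1, this.2.1, by omega⟩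
  · intro p hp q hq hpq
    rcases Finset.mem_insert.1 hp with rfl | hp <;> rcases Finset.mem_insert.1 hq with rfl | hq
    · exact absurd rfl hpq
    · have h2 := lp_snd_le hτ q hq
      have h1 : q.1 ≠ u ∧ q.2 ≠ u := by
        constructor <;> intro h <;> exact hu3 (mem_pts.2 ⟨q, hq, by simp [h]⟩)
      have h3 : q.1 < q.2 := (hτ.1 q hq).2.1
      refine ⟨fun h => h1.1 h.symm, by omega, by omega, by omega⟩
    · have h2 := lp_snd_le hτ p hp
      have h1 : p.1 ≠ u ∧ p.2 ≠ u := by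
        constructor <;> intro h <;> exact hu3 (mem_pts.2 ⟨p, hp, by simp [h]⟩)
      have h3 : p.1 < p.2 := (hτ.1 p hp).2.1
      refine ⟨h1.1, by omega, by omega, by omega⟩
    · exact hτ.2 p hp q hq hpq

lemma hat_card {n : ℕ} {τ : Finset (ℕ × ℕ)} {u : ℕ} (hτ : ∀ p ∈ τ, p.2 ≤ n) :
    (insert (u, n + 1) τ).card = τ.card + 1 :=
  Finset.card_insert_of_notMem (hat_notMem hτ)

lemma hat_fixedPts {n : ℕ} {τ : Finset (ℕ × ℕ)} {u : ℕ} (hτ : IsLinkPattern n τ)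
    (hu : u ∈ fixedPts n τ) :
    fixedPts (n + 1) (insert (u, n + 1) τ) = (fixedPts n τ).erase u := by
  ext f
  simp only [Finset.mem_erase, mem_fixedPts]
  constructor
  · rintro ⟨⟨h1, h2⟩, h3⟩
    have hfu : f ≠ u := fun h =>
      h3 (mem_pts.2 ⟨(u, n + 1), Finset.mem_insert_self _ _, Or.inl h.symm⟩)
    have hfn : f ≠ n + 1 := fun h =>
      h3 (mem_pts.2 ⟨(u, n + 1), Finset.mem_insert_self _ _, Or.inr h.symm⟩)
    refine ⟨hfu, ⟨h1, by omega⟩, fun hm => h3 ?_⟩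
    obtain ⟨p, hp, hor⟩ := mem_pts.1 hm
    exact mem_pts.2 ⟨p, Finset.mem_insert_of_mem hp, hor⟩
  · rintro ⟨hne, ⟨⟨h1, h2⟩, h3⟩⟩
    refine ⟨⟨h1, by omega⟩, fun hm => ?_⟩
    obtain ⟨p, hp, hor⟩ := mem_pts.1 hm
    rcases Finset.mem_insert.1 hp with rfl | hp
    · rcases hor with h | h
      · exact hne h.symm
      · simp only at h; omega
    · exact h3 (mem_pts.2 ⟨p, hp, hor⟩)

lemma arc_at_top_unique {n : ℕ} {ω : Finset (ℕ × ℕ)} (hω : IsLinkPattern (n + 1) ω)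
    {u v : ℕ} (hu : (u, n + 1) ∈ ω) (hv : (v, n + 1) ∈ ω) : u = v := by
  by_contra h
  have := hω.2 _ hu _ hv (by simp [h])
  simp at this

/-! ### Lemma H: order transfer -/

lemma hat_le_hat {n : ℕ} {ρ π : Finset (ℕ × ℕ)} (hρ : IsLinkPattern n ρ)
    (hπ : IsLinkPattern n π) (hcard : ρ.card = π.card) {x g : ℕ}
    (hx : x ∈ fixedPts n ρ) (hg : g ∈ fixedPts n π)
    (hgmax : ∀ f ∈ fixedPts n π, f ≤ g) (hle : lpLE n ρ π) :
    lpLE (n + 1) (insert (x, n + 1) ρ) (insert (g, n + 1) π) := by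
  intro a b ha hab hbn
  have hbρ := lp_snd_le hρ
  have hbπ := lp_snd_le hπ
  have hlen : ∀ a', 1 ≤ a' → a' ≤ n → RInt ρ a' n ≤ RInt π a' n := by
    intro a' h1 h2
    rcases eq_or_lt_of_le h2 with rfl | h2
    · rw [RInt_eq_zero' (fun p hp => (hρ.1 p hp).2.1) (le_refl _),
        RInt_eq_zero' (fun p hp => (hπ.1 p hp).2.1) (le_refl _)]
    · exact hle a' n h1 h2 (le_refl _)
  rcases Nat.lt_or_ge b (n + 1) with hb | hb
  · rw [RInt_insert_hat hbρ (by omega), RInt_insert_hat hbπ (by omega)]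
    exact hle a b ha hab (by omega)
  · have hbeq : b = n + 1 := le_antisymm hbn hb
    subst hbeq
    rw [RInt_insert_top hbρ, RInt_insert_top hbπ]
    by_cases hax : a ≤ x
    · by_cases hag : a ≤ g
      · rw [if_pos hax, if_pos hag]
        exact Nat.add_le_add_right (hlen a ha (by omega)) 1
      · -- a > g : use the interval identity
        have idρ := interval_identity hρ ha (show a ≤ n + 1 by omega)
        have idπ := interval_identity hπ ha (show a ≤ n + 1 by omega)
        have hFρ : 1 ≤ ((fixedPts n ρ).filter (fun f => a ≤ f)).card := by
          rw [Nat.one_le_iff_ne_zero, ← Nat.pos_iff_ne_zero, Finset.card_pos]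
          exact ⟨x, Finset.mem_filter.2 ⟨hx, hax⟩⟩
        have hFπ : ((fixedPts n π).filter (fun f => a ≤ f)).card = 0 := by
          rw [Finset.card_eq_zero, Finset.filter_eq_empty_iff]
          intro f hf haf
          exact hag (le_trans haf (hgmax f hf))
        have hlow : RInt ρ 1 (a - 1) ≤ RInt π 1 (a - 1) := by
          rcases Nat.lt_or_ge 1 (a - 1) with h | h
          · exact hle 1 (a - 1) (le_refl _) h (by omega)
          · rw [RInt_eq_zero' (fun p hp => (hρ.1 p hp).2.1) (by omega),
              RInt_eq_zero' (fun p hp => (hπ.1 p hp).2.1) (by omega)]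
        rw [if_pos hax, if_neg hag]
        omega
    · rw [if_neg hax]
      have := hlen a ha (by omega)
      split <;> omega

lemma hat_le_rev {n : ℕ} {ρ π : Finset (ℕ × ℕ)} (hbρ : ∀ p ∈ ρ, p.2 ≤ n)
    (hbπ : ∀ p ∈ π, p.2 ≤ n) {x g : ℕ}
    (h : lpLE (n + 1) (insert (x, n + 1) ρ) (insert (g, n + 1) π)) : lpLE n ρ π := by
  intro a b ha hab hbn
  have := h a b ha hab (by omega)
  rwa [RInt_insert_hat hbρ hbn, RInt_insert_hat hbπ hbn] at this


/-! ### b + c invariance under maximal completion -/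

lemma hat_crossings {n : ℕ} {τ : Finset (ℕ × ℕ)} {g : ℕ} (hτ : IsLinkPattern n τ)
    (hg : g ∈ fixedPts n τ) :
    crossings (insert (g, n + 1) τ)
      = crossings τ + (τ.filter (fun p => p.1 < g ∧ g < p.2)).card := by
  classical
  set e : ℕ × ℕ := (g, n + 1) with he
  have hbτ := lp_snd_le hτ
  have hen : e ∉ τ := hat_notMem hbτ
  have hSeq : ((insert e τ ×ˢ insert e τ).filter
        (fun q => q.1.1 < q.2.1 ∧ q.2.1 < q.1.2 ∧ q.1.2 < q.2.2))
      = ((τ ×ˢ τ).filter (fun q => q.1.1 < q.2.1 ∧ q.2.1 < q.1.2 ∧ q.1.2 < q.2.2))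
        ∪ ((τ.filter (fun p => p.1 < g ∧ g < p.2)).image (fun p => (p, e))) := by
    ext q
    simp only [Finset.mem_union, Finset.mem_filter, Finset.mem_product, Finset.mem_insert,
      Finset.mem_image]
    constructor
    · rintro ⟨⟨hq1, hq2⟩, hP⟩
      have hq1τ : q.1 ∈ τ := by
        rcases hq1 with h | h
        · exfalso
          have : q.2.2 ≤ n + 1 := by
            rcases hq2 with h2 | h2
            · rw [h2]
            · exact Nat.le_trans (hbτ _ h2) (Nat.le_succ n)
          rw [h] at hP
          simp only [he] at hP
          omega
        · exact h
      rcases hq2 with h2 | h2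
      · right
        refine ⟨q.1, ⟨hq1τ, ?_⟩, ?_⟩
        · rw [h2] at hP; simp only [he] at hP; exact ⟨hP.1, hP.2.1⟩
        · exact Prod.ext rfl h2.symm
      · left; exact ⟨⟨hq1τ, h2⟩, hP⟩
    · rintro (⟨⟨hq1, hq2⟩, hP⟩ | ⟨p, hp, rfl⟩)
      · exact ⟨⟨Or.inr hq1, Or.inr hq2⟩, hP⟩
      · refine ⟨⟨Or.inr hp.1, Or.inl rfl⟩, ?_⟩
        simp only [he]
        refine ⟨hp.2.1, hp.2.2, by have := hbτ _ hp.1; omega⟩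
  unfold crossings
  rw [hSeq, Finset.card_union_of_disjoint, Finset.card_image_of_injective]
  · intro p q h
    simpa using congrArg Prod.fst h
  · rw [Finset.disjoint_right]
    rintro q hq hq2
    simp only [Finset.mem_image] at hq
    obtain ⟨p, hp, rfl⟩ := hq
    rw [Finset.mem_filter, Finset.mem_product] at hq2
    exact hen hq2.1.2

lemma hat_bridges {n : ℕ} {τ : Finset (ℕ × ℕ)} {g : ℕ} (hτ : IsLinkPattern n τ)
    (hg : g ∈ fixedPts n τ) (hgmax : ∀ f ∈ fixedPts n τ, f ≤ g) :
    bridges n τ = bridges (n + 1) (insert (g, n + 1) τ)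
      + (τ.filter (fun p => p.1 < g ∧ g < p.2)).card := by
  classical
  set e : ℕ × ℕ := (g, n + 1) with he
  have hbτ := lp_snd_le hτ
  have hen : e ∉ τ := hat_notMem hbτ
  set F' := (fixedPts n τ).erase g with hF'
  -- the bridges of the completion
  have h1 : bridges (n + 1) (insert e τ)
      = ((τ ×ˢ F').filter (fun q => q.1.1 < q.2 ∧ q.2 < q.1.2)).card := by
    unfold bridges
    rw [hat_fixedPts hτ hg]
    congr 1
    ext q
    simp only [Finset.mem_filter, Finset.mem_product, Finset.mem_insert]
    constructor
    · rintro ⟨⟨hq1, hq2⟩, hP⟩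
      rcases hq1 with h | h
      · exfalso
        rw [h] at hP
        simp only [he] at hP
        have hle := hgmax q.2 (Finset.mem_of_mem_erase hq2)
        omega
      · exact ⟨⟨h, hq2⟩, hP⟩
    · rintro ⟨⟨hq1, hq2⟩, hP⟩
      exact ⟨⟨Or.inr hq1, hq2⟩, hP⟩
  -- the bridges of τ split
  have h2 : (τ ×ˢ fixedPts n τ).filter (fun q => q.1.1 < q.2 ∧ q.2 < q.1.2)
      = ((τ ×ˢ F').filter (fun q => q.1.1 < q.2 ∧ q.2 < q.1.2))
        ∪ ((τ.filter (fun p => p.1 < g ∧ g < p.2)).image (fun p => (p, g))) := by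
    ext q
    simp only [Finset.mem_union, Finset.mem_filter, Finset.mem_product, Finset.mem_image, hF',
      Finset.mem_erase]
    constructor
    · rintro ⟨⟨hq1, hq2⟩, hP⟩
      by_cases hqg : q.2 = g
      · right
        exact ⟨q.1, ⟨hq1, by rw [← hqg]; exact hP⟩, Prod.ext rfl hqg.symm⟩
      · left; exact ⟨⟨hq1, hqg, hq2⟩, hP⟩
    · rintro (⟨⟨hq1, hq2⟩, hP⟩ | ⟨p, hp, rfl⟩)
      · exact ⟨⟨hq1, hq2.2⟩, hP⟩
      · exact ⟨⟨hp.1, hg⟩, hp.2⟩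
  unfold bridges
  rw [h2, Finset.card_union_of_disjoint, Finset.card_image_of_injective, ← h1]
  · rfl
  · intro p q h
    simpa using congrArg Prod.fst h
  · rw [Finset.disjoint_right]
    rintro q hq hq2
    simp only [Finset.mem_image] at hq
    obtain ⟨p, hp, rfl⟩ := hq
    rw [Finset.mem_filter, Finset.mem_product, hF'] at hq2
    exact (Finset.mem_erase.1 hq2.1.2).1 rfl

lemma hat_bc {n : ℕ} {τ : Finset (ℕ × ℕ)} {g : ℕ} (hτ : IsLinkPattern n τ)
    (hg : g ∈ fixedPts n τ) (hgmax : ∀ f ∈ fixedPts n τ, f ≤ g) :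
    bridges (n + 1) (insert (g, n + 1) τ) + crossings (insert (g, n + 1) τ)
      = bridges n τ + crossings τ := by
  have h1 := hat_crossings hτ hg
  have h2 := hat_bridges hτ hg hgmax
  omega


/-! ### counting and pNum -/

lemma choose_two_succ (a : ℕ) : (a + 1).choose 2 = a.choose 2 + a := by
  rw [Nat.choose_succ_succ a 1, Nat.choose_one_right, Nat.add_comm]

lemma choose_two_add (a b : ℕ) : (a + b).choose 2 = a.choose 2 + a * b + b.choose 2 := by
  induction b with
  | zero => simp
  | succ b ih =>
    rw [← Nat.add_assoc, choose_two_succ, ih, choose_two_succ]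
    ring

lemma two_mul_choose_two (a : ℕ) : 2 * a.choose 2 + a = a * a := by
  induction a with
  | zero => simp
  | succ a ih =>
    rw [choose_two_succ, Nat.mul_add]
    have h : (a + 1) * (a + 1) = a * a + 2 * a + 1 := by ring
    rw [h, ← ih]
    ring

lemma fixedPts_card {n : ℕ} {τ : Finset (ℕ × ℕ)} (hτ : IsLinkPattern n τ) :
    (fixedPts n τ).card + 2 * τ.card = n := by
  have h := interval_identity hτ (le_refl 1) (by omega)
  have h1 : RInt τ 1 n = τ.card := by
    unfold RInt
    rw [Finset.filter_true_of_mem (fun p hp => ⟨(hτ.1 p hp).1, (hτ.1 p hp).2.2⟩)]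
  have h2 : (fixedPts n τ).filter (fun f => 1 ≤ f) = fixedPts n τ :=
    Finset.filter_true_of_mem (fun f hf => (mem_fixedPts.1 hf).1.1)
  have h3 : RInt τ 1 (1 - 1) = 0 :=
    RInt_eq_zero' (fun p hp => (hτ.1 p hp).2.1) (by omega)
  rw [h1, h2, h3] at h
  omega

lemma crossings_le {n : ℕ} {τ : Finset (ℕ × ℕ)} (hτ : IsLinkPattern n τ) :
    2 * crossings τ + τ.card ≤ τ.card * τ.card := by
  classical
  set A := (τ ×ˢ τ).filter (fun q => q.1.1 < q.2.1) with hA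
  set A' := (τ ×ˢ τ).filter (fun q => q.2.1 < q.1.1) with hA'
  have hsub : crossings τ ≤ A.card := by
    apply Finset.card_le_card
    rw [hA]
    intro q hq
    rw [Finset.mem_filter] at hq ⊢
    exact ⟨hq.1, hq.2.1⟩
  have hswap : A.card = A'.card := by
    apply Finset.card_bij (fun q _ => (q.2, q.1))
    · rintro q hq
      rw [hA, Finset.mem_filter, Finset.mem_product] at hq
      rw [hA', Finset.mem_filter, Finset.mem_product]
      exact ⟨⟨hq.1.2, hq.1.1⟩, hq.2⟩
    · rintro q hq q' hq' h
      have h1 := congrArg Prod.fst h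
      have h2 := congrArg Prod.snd h
      simp only at h1 h2
      exact Prod.ext h2 h1
    · rintro q hq
      rw [hA', Finset.mem_filter, Finset.mem_product] at hq
      refine ⟨(q.2, q.1), ?_, rfl⟩
      rw [hA, Finset.mem_filter, Finset.mem_product]
      exact ⟨⟨hq.1.2, hq.1.1⟩, hq.2⟩
  have hunion : A ∪ A' = τ.offDiag := by
    ext q
    rw [Finset.mem_offDiag]
    simp only [hA, hA', Finset.mem_union, Finset.mem_filter, Finset.mem_product]
    constructor
    · rintro (⟨⟨h1, h2⟩, h3⟩ | ⟨⟨h1, h2⟩, h3⟩) <;>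
        exact ⟨h1, h2, fun h => by rw [h] at h3; omega⟩
    · rintro ⟨h1, h2, h3⟩
      have := (hτ.2 q.1 h1 q.2 h2 h3).1
      rcases Nat.lt_or_ge q.1.1 q.2.1 with h | h
      · exact Or.inl ⟨⟨h1, h2⟩, h⟩
      · exact Or.inr ⟨⟨h1, h2⟩, by omega⟩
  have hdisj : Disjoint A A' := by
    rw [Finset.disjoint_left]
    rintro q hq hq'
    rw [hA, Finset.mem_filter] at hq
    rw [hA', Finset.mem_filter] at hq'
    omega
  have htot : A.card + A'.card = τ.card * τ.card - τ.card := by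
    rw [← Finset.card_union_of_disjoint hdisj, hunion, Finset.offDiag_card]
  rcases Nat.eq_zero_or_pos τ.card with h | h
  · obtain rfl : τ = ∅ := Finset.card_eq_zero.1 h
    have : crossings (∅ : Finset (ℕ × ℕ)) = 0 := by
      unfold crossings
      simp
    rw [this, h]
  · have hle : τ.card ≤ τ.card * τ.card := Nat.le_mul_of_pos_left _ h
    generalize hgE : τ.card * τ.card = E at *
    omega

lemma bridges_le {n : ℕ} (τ : Finset (ℕ × ℕ)) :
    bridges n τ ≤ τ.card * (fixedPts n τ).card := by
  calc bridges n τ ≤ (τ ×ˢ fixedPts n τ).card :=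
        Finset.card_le_card (Finset.filter_subset _ _)
    _ = _ := Finset.card_product _ _

lemma pNum_hat {n k : ℕ} {σ : Finset (ℕ × ℕ)} (hσ : IsLinkPattern n σ) (hσk : σ.card = k)
    (hnk : 2 * k < n) {g : ℕ} (hg : g ∈ fixedPts n σ) (hgmax : ∀ f ∈ fixedPts n σ, f ≤ g) :
    pNum (n + 1) (k + 1) (insert (g, n + 1) σ) = pNum n k σ + (n - 2 * k - 1) := by
  have hbc := hat_bc hσ hg hgmax
  have hfix : (fixedPts n σ).card = n - 2 * k := by
    have := fixedPts_card hσ; omega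
  have hb := bridges_le (n := n) σ
  have hc := crossings_le hσ
  rw [hσk, hfix] at hb
  rw [hσk] at hc
  unfold pNum
  obtain ⟨m, hm⟩ : ∃ m, n - 2 * k = m + 1 := ⟨n - 2 * k - 1, by omega⟩
  have e1 : n + 1 - (k + 1) = n - k := by omega
  have e2 : n + 1 - 2 * (k + 1) = m := by omega
  have e3 : n - 2 * k - 1 = m := by omega
  rw [e1, e2, e3, hm]
  rw [hm] at hb
  have h1 : (n - k).choose 2 = k.choose 2 + k * (m + 1) + (m + 1).choose 2 := by
    have : n - k = k + (m + 1) := by omega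
    rw [this, choose_two_add]
  have h2 : (m + 1).choose 2 = m.choose 2 + m := choose_two_succ m
  have h4 := two_mul_choose_two k
  generalize hgA : k.choose 2 = A at *
  generalize hgB : k * (m + 1) = B at *
  generalize hgC : (m + 1).choose 2 = C at *
  generalize hgD : m.choose 2 = D at *
  generalize hgE : k * k = E at *
  generalize hgF : (n - k).choose 2 = F at *
  omega

/-! ### predecessors and adjacency -/

def Adj (n : ℕ) (ω υ : Finset (ℕ × ℕ)) : Prop :=
  IsPredecessor n ω υ ∨ IsPredecessor n υ ω

lemma fixed_not_pts {n : ℕ} {ρ : Finset (ℕ × ℕ)} {f : ℕ} (hf : f ∈ fixedPts n ρ) :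
    f ∉ pts ρ := (mem_fixedPts.1 hf).2

lemma not_pred_self {n : ℕ} {τ : Finset (ℕ × ℕ)} (h : IsPredecessor n τ τ) : False := by
  rcases h with ⟨i, j, f, hij, hf, hif, hfj, hor | hor⟩ |
    ⟨i, j, l, m, hij, hlm, hil, hlj, hjm, hor | hor⟩
  · have hjf : j ≠ f := fun he =>
      fixed_not_pts hf (mem_pts.2 ⟨(i, j), hij, Or.inr he⟩)
    have hmem : (i, j) ∈ τ := hij
    rw [hor] at hmem
    rcases Finset.mem_insert.1 hmem with he | he
    · exact hjf (congrArg Prod.snd he)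
    · exact (Finset.mem_erase.1 he).1 rfl
  · have hif' : i ≠ f := fun he =>
      fixed_not_pts hf (mem_pts.2 ⟨(i, j), hij, Or.inl he⟩)
    have hmem : (i, j) ∈ τ := hij
    rw [hor] at hmem
    rcases Finset.mem_insert.1 hmem with he | he
    · exact hif' (congrArg Prod.fst he)
    · exact (Finset.mem_erase.1 he).1 rfl
  · have hmem : (i, j) ∈ τ := hij
    rw [hor] at hmem
    rcases Finset.mem_insert.1 hmem with he | he
    · have := congrArg Prod.snd he; simp only at this; omega
    · rcases Finset.mem_insert.1 he with he2 | he2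
      · have h1 := congrArg Prod.fst he2; have h2 := congrArg Prod.snd he2
        simp only at h1 h2; omega
      · exact (Finset.mem_erase.1 (Finset.mem_of_mem_erase he2)).1 rfl
  · have hmem : (i, j) ∈ τ := hij
    rw [hor] at hmem
    rcases Finset.mem_insert.1 hmem with he | he
    · have := congrArg Prod.snd he; simp only at this; omega
    · rcases Finset.mem_insert.1 he with he2 | he2
      · have h1 := congrArg Prod.fst he2; simp only at h1; omega
      · exact (Finset.mem_erase.1 (Finset.mem_of_mem_erase he2)).1 rfl

lemma not_adj_self {n : ℕ} {τ : Finset (ℕ × ℕ)} (h : Adj n τ τ) : False := by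
  rcases h with h | h <;> exact not_pred_self h

/-! ### pts of moves -/

lemma pts_insert (p : ℕ × ℕ) (s : Finset (ℕ × ℕ)) :
    pts (insert p s) = {p.1, p.2} ∪ pts s := Finset.biUnion_insert

lemma pts_erase {n : ℕ} {ρ : Finset (ℕ × ℕ)} (hρ : IsLinkPattern n ρ) {q : ℕ × ℕ}
    (hq : q ∈ ρ) : pts (ρ.erase q) = pts ρ \ {q.1, q.2} := by
  ext y
  simp only [Finset.mem_sdiff, mem_pts, Finset.mem_insert, Finset.mem_singleton]
  constructor
  · rintro ⟨p, hp, hor⟩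
    rw [Finset.mem_erase] at hp
    have hd := hρ.2 p hp.2 q hq hp.1
    refine ⟨⟨p, hp.2, hor⟩, ?_⟩
    rintro (rfl | rfl) <;> rcases hor with h | h <;> simp_all
  · rintro ⟨⟨p, hp, hor⟩, hy⟩
    refine ⟨p, Finset.mem_erase.2 ⟨?_, hp⟩, hor⟩
    rintro rfl
    rcases hor with h | h <;> exact hy (by simp [← h])

lemma mem_pts_of_mem {p : ℕ × ℕ} {s : Finset (ℕ × ℕ)} (h : p ∈ s) :
    p.1 ∈ pts s ∧ p.2 ∈ pts s :=
  ⟨mem_pts.2 ⟨p, h, Or.inl rfl⟩, mem_pts.2 ⟨p, h, Or.inr rfl⟩⟩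

/-- endpoints after a move of the first kind, variant (i,f) -/
lemma pts_move_a {n : ℕ} {ρ : Finset (ℕ × ℕ)} (hρ : IsLinkPattern n ρ) {i j f : ℕ}
    (hij : (i, j) ∈ ρ) (hf : f ∈ fixedPts n ρ) :
    pts (insert (i, f) (ρ.erase (i, j))) = insert f ((pts ρ).erase j) := by
  rw [pts_insert, pts_erase hρ hij]
  have hi : i ∈ pts ρ := (mem_pts_of_mem hij).1
  have hij' : i ≠ j := ne_of_lt (hρ.1 _ hij).2.1
  ext y
  simp only [Finset.mem_union, Finset.mem_insert, Finset.mem_singleton, Finset.mem_sdiff,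
    Finset.mem_erase]
  constructor
  · rintro ((rfl | rfl) | ⟨h1, h2⟩)
    · exact Or.inr ⟨hij', hi⟩
    · exact Or.inl rfl
    · exact Or.inr ⟨fun h => h2 (Or.inr h), h1⟩
  · rintro (rfl | ⟨h1, h2⟩)
    · exact Or.inl (Or.inr rfl)
    · by_cases hy : y = i
      · exact Or.inl (Or.inl hy)
      · exact Or.inr ⟨h2, by tauto⟩

/-- endpoints after a move of the first kind, variant (f,j) -/
lemma pts_move_b {n : ℕ} {ρ : Finset (ℕ × ℕ)} (hρ : IsLinkPattern n ρ) {i j f : ℕ}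
    (hij : (i, j) ∈ ρ) (hf : f ∈ fixedPts n ρ) :
    pts (insert (f, j) (ρ.erase (i, j))) = insert f ((pts ρ).erase i) := by
  rw [pts_insert, pts_erase hρ hij]
  have hj : j ∈ pts ρ := (mem_pts_of_mem hij).2
  have hij' : i ≠ j := ne_of_lt (hρ.1 _ hij).2.1
  ext y
  simp only [Finset.mem_union, Finset.mem_insert, Finset.mem_singleton, Finset.mem_sdiff,
    Finset.mem_erase]
  constructor
  · rintro ((rfl | rfl) | ⟨h1, h2⟩)
    · exact Or.inl rfl
    · exact Or.inr ⟨fun h => hij' h.symm, hj⟩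
    · exact Or.inr ⟨fun h => h2 (Or.inl h), h1⟩
  · rintro (rfl | ⟨h1, h2⟩)
    · exact Or.inl (Or.inl rfl)
    · by_cases hy : y = j
      · exact Or.inl (Or.inr hy)
      · exact Or.inr ⟨h2, by tauto⟩

lemma diff_move_a {n : ℕ} {ρ : Finset (ℕ × ℕ)} (hρ : IsLinkPattern n ρ) {i j f : ℕ}
    (hij : (i, j) ∈ ρ) (hf : f ∈ fixedPts n ρ) :
    pts ρ \ pts (insert (i, f) (ρ.erase (i, j))) = {j} := by
  rw [pts_move_a hρ hij hf]
  have hfp := fixed_not_pts hf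
  have hj : j ∈ pts ρ := (mem_pts_of_mem hij).2
  have hjf : j ≠ f := fun h => hfp (h ▸ hj)
  ext y
  simp only [Finset.mem_sdiff, Finset.mem_insert, Finset.mem_erase, Finset.mem_singleton]
  constructor
  · rintro ⟨h1, h2⟩
    push_neg at h2
    by_contra hy
    exact (h2.2 hy) h1
  · rintro rfl
    refine ⟨hj, ?_⟩
    push_neg
    exact ⟨hjf, fun h => absurd rfl h.elim⟩

lemma diff_move_b {n : ℕ} {ρ : Finset (ℕ × ℕ)} (hρ : IsLinkPattern n ρ) {i j f : ℕ}
    (hij : (i, j) ∈ ρ) (hf : f ∈ fixedPts n ρ) :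
    pts ρ \ pts (insert (f, j) (ρ.erase (i, j))) = {i} := by
  rw [pts_move_b hρ hij hf]
  have hfp := fixed_not_pts hf
  have hi : i ∈ pts ρ := (mem_pts_of_mem hij).1
  have hif : i ≠ f := fun h => hfp (h ▸ hi)
  ext y
  simp only [Finset.mem_sdiff, Finset.mem_insert, Finset.mem_erase, Finset.mem_singleton]
  constructor
  · rintro ⟨h1, h2⟩
    push_neg at h2
    by_contra hy
    exact (h2.2 hy) h1
  · rintro rfl
    refine ⟨hi, ?_⟩
    push_neg
    exact ⟨hif, fun h => absurd rfl h.elim⟩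


/-! ### insert/erase at the top point -/

lemma snd_ne_top {s : Finset (ℕ × ℕ)} {n : ℕ} (hs : ∀ p ∈ s, p.2 ≤ n) {q : ℕ × ℕ}
    (hq : q ∈ s) {x : ℕ} : (x, n + 1) ≠ q := by
  intro h
  have := hs q hq
  rw [← h] at this
  simp at this

lemma erase_insert_top {s : Finset (ℕ × ℕ)} {n x : ℕ} (hs : ∀ p ∈ s, p.2 ≤ n) :
    (insert (x, n + 1) s).erase (x, n + 1) = s := Finset.erase_insert (hat_notMem hs)

lemma erase_comm_top {s : Finset (ℕ × ℕ)} {n x : ℕ} {q : ℕ × ℕ} (hq : q.2 ≤ n) :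
    (insert (x, n + 1) s).erase q = insert (x, n + 1) (s.erase q) :=
  Finset.erase_insert_of_ne (by intro h; rw [← h] at hq; simp at hq)

lemma insert_top_inj {n u x : ℕ} {ρ X : Finset (ℕ × ℕ)} (hρ : ∀ p ∈ ρ, p.2 ≤ n)
    (hX : ∀ p ∈ X, p.2 ≤ n) (h : insert (u, n + 1) ρ = insert (x, n + 1) X) :
    u = x ∧ ρ = X := by
  have hmem : (u, n + 1) ∈ insert (x, n + 1) X := h ▸ Finset.mem_insert_self _ _
  rcases Finset.mem_insert.1 hmem with he | he
  · have hux : u = x := congrArg Prod.fst he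
    subst hux
    constructor
    · rfl
    · have := congrArg (fun s => Finset.erase s (u, n + 1)) h
      simpa [erase_insert_top hρ, erase_insert_top hX] using this
  · exact absurd (hX _ he) (by simp)

lemma mem_hat_top {n : ℕ} {s : Finset (ℕ × ℕ)} (hs : ∀ p ∈ s, p.2 ≤ n) {u x : ℕ}
    (h : (u, n + 1) ∈ insert (x, n + 1) s) : u = x := by
  rcases Finset.mem_insert.1 h with he | he
  · exact congrArg Prod.fst he
  · exact absurd (hs _ he) (by simp)

/-- the extra family: `ρ ∪ {(u,n+1)}` is adjacent to `ρ ∪ {(x,n+1)}` for `u ≠ x` fixed. -/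
lemma class_self {n : ℕ} {ρ : Finset (ℕ × ℕ)} (hρ : IsLinkPattern n ρ) {x u : ℕ}
    (hx : x ∈ fixedPts n ρ) (hu : u ∈ fixedPts n ρ) (hne : u ≠ x) :
    Adj (n + 1) (insert (u, n + 1) ρ) (insert (x, n + 1) ρ) := by
  have hbρ := lp_snd_le hρ
  rcases Nat.lt_or_ge u x with h | h
  · -- u < x : ω₂ is a predecessor of ω  (bridge (u,n+1) over x)
    right
    left
    refine ⟨u, n + 1, x, Finset.mem_insert_self _ _, ?_, h, ?_, Or.inr ?_⟩
    · rw [hat_fixedPts hρ hu]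
      exact Finset.mem_erase.2 ⟨fun he => hne he.symm, hx⟩
    · have := (mem_fixedPts.1 hx).1.2; omega
    · rw [erase_insert_top hbρ]
  · -- x < u : ω is a predecessor of ω₂  (bridge (x,n+1) over u)
    left
    left
    refine ⟨x, n + 1, u, Finset.mem_insert_self _ _, ?_, by omega, ?_, Or.inr ?_⟩
    · rw [hat_fixedPts hρ hx]
      exact Finset.mem_erase.2 ⟨hne, hu⟩
    · have := (mem_fixedPts.1 hu).1.2; omega
    · rw [erase_insert_top hbρ]


/-! ### more diff lemmas and helpers -/

lemma diff_move_a' {n : ℕ} {ρ : Finset (ℕ × ℕ)} (hρ : IsLinkPattern n ρ) {i j f : ℕ}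
    (hij : (i, j) ∈ ρ) (hf : f ∈ fixedPts n ρ) :
    pts (insert (i, f) (ρ.erase (i, j))) \ pts ρ = {f} := by
  rw [pts_move_a hρ hij hf]
  have hfp := fixed_not_pts hf
  ext y
  simp only [Finset.mem_sdiff, Finset.mem_insert, Finset.mem_erase, Finset.mem_singleton]
  constructor
  · rintro ⟨rfl | ⟨h1, h2⟩, h3⟩
    · rfl
    · exact absurd h2 h3
  · rintro rfl
    exact ⟨Or.inl rfl, hfp⟩

lemma diff_move_b' {n : ℕ} {ρ : Finset (ℕ × ℕ)} (hρ : IsLinkPattern n ρ) {i j f : ℕ}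
    (hij : (i, j) ∈ ρ) (hf : f ∈ fixedPts n ρ) :
    pts (insert (f, j) (ρ.erase (i, j))) \ pts ρ = {f} := by
  rw [pts_move_b hρ hij hf]
  have hfp := fixed_not_pts hf
  ext y
  simp only [Finset.mem_sdiff, Finset.mem_insert, Finset.mem_erase, Finset.mem_singleton]
  constructor
  · rintro ⟨rfl | ⟨h1, h2⟩, h3⟩
    · rfl
    · exact absurd h2 h3
  · rintro rfl
    exact ⟨Or.inl rfl, hfp⟩

lemma snd_le_insert {n : ℕ} {s : Finset (ℕ × ℕ)} (hs : ∀ p ∈ s, p.2 ≤ n) {q : ℕ × ℕ}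
    (hq : q.2 ≤ n) : ∀ p ∈ insert q s, p.2 ≤ n := by
  intro p hp
  rcases Finset.mem_insert.1 hp with rfl | hp
  · exact hq
  · exact hs p hp

lemma snd_le_erase {n : ℕ} {s : Finset (ℕ × ℕ)} (hs : ∀ p ∈ s, p.2 ≤ n) (q : ℕ × ℕ) :
    ∀ p ∈ s.erase q, p.2 ≤ n := fun p hp => hs p (Finset.mem_of_mem_erase hp)

lemma pts_mono {s t : Finset (ℕ × ℕ)} (h : s ⊆ t) : pts s ⊆ pts t := by
  intro y hy
  obtain ⟨p, hp, hor⟩ := mem_pts.1 hy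
  exact mem_pts.2 ⟨p, h hp, hor⟩

lemma mem_pts_insert {q : ℕ × ℕ} {s : Finset (ℕ × ℕ)} {y : ℕ} :
    y ∈ pts (insert q s) ↔ y = q.1 ∨ y = q.2 ∨ y ∈ pts s := by
  rw [pts_insert]
  simp [or_assoc]

/-! ### the classification lemma -/

lemma class_adj {n : ℕ} {ρ ρ'' : Finset (ℕ × ℕ)} (hρ : IsLinkPattern n ρ)
    (hρ'' : IsLinkPattern n ρ'') {x u : ℕ} (hx : x ∈ fixedPts n ρ)
    (hu : u ∈ fixedPts n ρ'') (hne : ρ'' ≠ ρ)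
    (hadj : Adj (n + 1) (insert (u, n + 1) ρ'') (insert (x, n + 1) ρ)) :
    Adj n ρ'' ρ ∧ ((x ∈ pts ρ'' ∧ pts ρ \ pts ρ'' = {u}) ∨ (x ∉ pts ρ'' ∧ u = x)) := by
  have hbρ := lp_snd_le hρ
  have hbρ'' := lp_snd_le hρ''
  have hxp := fixed_not_pts hx
  have hup := fixed_not_pts hu
  have hsndω₂ : ∀ p ∈ insert (x, n + 1) ρ, p.2 ≤ n + 1 := by
    intro p hp
    rcases Finset.mem_insert.1 hp with rfl | hp
    · exact le_refl _
    · exact Nat.le_succ_of_le (hbρ p hp)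
  have hsndω : ∀ p ∈ insert (u, n + 1) ρ'', p.2 ≤ n + 1 := by
    intro p hp
    rcases Finset.mem_insert.1 hp with rfl | hp
    · exact le_refl _
    · exact Nat.le_succ_of_le (hbρ'' p hp)
  rcases hadj with hpred | hpred
  · -- ω = insert (u,n+1) ρ'' is obtained from ω₂ = insert (x,n+1) ρ by a move
    rcases hpred with ⟨i, j, f, hij, hf, hif, hfj, hor⟩ |
      ⟨i, j, l, m, hij, hlm, hil, hlj, hjm, hor⟩
    · -- type 1 move
      rw [hat_fixedPts hρ hx] at hf
      obtain ⟨hfx, hffix⟩ := Finset.mem_erase.1 hf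
      have hfn : f ≤ n := (mem_fixedPts.1 hffix).1.2
      rcases Finset.mem_insert.1 hij with he | hijρ
      · -- the moved arc is (x, n+1)
        have h1 : x = i := (congrArg Prod.fst he).symm
        have h2 : (n + 1 : ℕ) = j := (congrArg Prod.snd he).symm
        subst h1; subst h2
        rcases hor with hor | hor
        · -- ω = insert (x, f) ρ : impossible, no arc at n+1
          rw [erase_insert_top hbρ] at hor
          have hmem : (u, n + 1) ∈ insert (x, f) ρ := hor ▸ Finset.mem_insert_self _ _
          rcases Finset.mem_insert.1 hmem with he2 | he2
          · have := congrArg Prod.snd he2; simp only at this; omega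
          · exact absurd (hbρ _ he2) (by simp)
        · -- ω = insert (f, n+1) ρ : gives ρ'' = ρ, excluded
          rw [erase_insert_top hbρ] at hor
          obtain ⟨-, heq⟩ := insert_top_inj hbρ'' hbρ hor
          exact absurd heq hne
      · -- the moved arc is in ρ
        have hjn : j ≤ n := hbρ _ hijρ
        rcases hor with hor | hor
        · rw [erase_comm_top hjn, Finset.insert_comm] at hor
          obtain ⟨hux, heq⟩ := insert_top_inj hbρ''
            (snd_le_insert (snd_le_erase hbρ _) hfn) hor
          refine ⟨Or.inl (Or.inl ⟨i, j, f, hijρ, hffix, hif, hfj, Or.inl heq⟩),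
            Or.inr ⟨?_, hux⟩⟩
          intro hmem
          rw [heq, pts_move_a hρ hijρ hffix] at hmem
          rcases Finset.mem_insert.1 hmem with rfl | hmem
          · exact hfx rfl
          · exact hxp (Finset.mem_of_mem_erase hmem)
        · rw [erase_comm_top hjn, Finset.insert_comm] at hor
          obtain ⟨hux, heq⟩ := insert_top_inj hbρ''
            (snd_le_insert (snd_le_erase hbρ _) hjn) hor
          refine ⟨Or.inl (Or.inl ⟨i, j, f, hijρ, hffix, hif, hfj, Or.inr heq⟩),
            Or.inr ⟨?_, hux⟩⟩
          intro hmem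
          rw [heq, pts_move_b hρ hijρ hffix] at hmem
          rcases Finset.mem_insert.1 hmem with rfl | hmem
          · exact hfx rfl
          · exact hxp (Finset.mem_of_mem_erase hmem)
    · -- type 2 move
      rcases Finset.mem_insert.1 hij with he | hijρ
      · -- (i,j) = (x,n+1) : impossible since j < m ≤ n+1
        have h2 : j = n + 1 := congrArg Prod.snd he
        have := hsndω₂ _ hlm
        simp only at this
        omega
      · have hjn : j ≤ n := hbρ _ hijρ
        rcases Finset.mem_insert.1 hlm with he | hlmρ
        · -- (l,m) = (x,n+1)
          have h1 : x = l := (congrArg Prod.fst he).symm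
          have h2 : (n + 1 : ℕ) = m := (congrArg Prod.snd he).symm
          subst h1; subst h2
          have herase : ((insert (x, n + 1) ρ).erase (i, j)).erase (x, n + 1)
              = ρ.erase (i, j) := by
            rw [erase_comm_top hjn, erase_insert_top (snd_le_erase hbρ _)]
          rcases hor with hor | hor
          · -- ω = insert (j,n+1) (insert (i,x) (ρ.erase (i,j)))
            rw [herase, Finset.insert_comm] at hor
            obtain ⟨huj, heq⟩ := insert_top_inj hbρ''
              (snd_le_insert (snd_le_erase hbρ _) (le_of_lt (lt_of_lt_of_le hlj hjn))) hor
            refine ⟨Or.inl (Or.inl ⟨i, j, x, hijρ, hx, hil, hlj, Or.inl heq⟩),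
              Or.inl ⟨?_, ?_⟩⟩
            · rw [heq]
              exact mem_pts.2 ⟨(i, x), Finset.mem_insert_self _ _, Or.inr rfl⟩
            · rw [huj, heq]
              exact diff_move_a hρ hijρ hx
          · -- ω = insert (i,n+1) (insert (x,j) (ρ.erase (i,j)))
            rw [herase] at hor
            obtain ⟨hui, heq⟩ := insert_top_inj hbρ''
              (snd_le_insert (snd_le_erase hbρ _) hjn) hor
            refine ⟨Or.inl (Or.inl ⟨i, j, x, hijρ, hx, hil, hlj, Or.inr heq⟩),
              Or.inl ⟨?_, ?_⟩⟩
            · rw [heq]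
              exact mem_pts.2 ⟨(x, j), Finset.mem_insert_self _ _, Or.inl rfl⟩
            · rw [hui, heq]
              exact diff_move_b hρ hijρ hx
        · -- both arcs in ρ
          have hmn : m ≤ n := hbρ _ hlmρ
          have herase : ((insert (x, n + 1) ρ).erase (i, j)).erase (l, m)
              = insert (x, n + 1) ((ρ.erase (i, j)).erase (l, m)) := by
            rw [erase_comm_top hjn, erase_comm_top hmn]
          rcases hor with hor | hor
          · rw [herase, Finset.insert_comm (j, m), Finset.insert_comm (i, l)] at hor
            obtain ⟨hux, heq⟩ := insert_top_inj hbρ''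
              (snd_le_insert (snd_le_insert (snd_le_erase (snd_le_erase hbρ _) _) hmn)
                (le_of_lt (lt_of_lt_of_le hlj hjn))) hor
            refine ⟨Or.inl (Or.inr ⟨i, j, l, m, hijρ, hlmρ, hil, hlj, hjm, Or.inl heq⟩),
              Or.inr ⟨?_, hux⟩⟩
            intro hmem
            rw [heq] at hmem
            rcases mem_pts_insert.1 hmem with h | h | h
            · exact hxp (h ▸ (mem_pts_of_mem hijρ).1)
            · exact hxp (h ▸ (mem_pts_of_mem hlmρ).1)
            · rcases mem_pts_insert.1 h with h2 | h2 | h2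
              · exact hxp (h2 ▸ (mem_pts_of_mem hijρ).2)
              · exact hxp (h2 ▸ (mem_pts_of_mem hlmρ).2)
              · exact hxp (pts_mono ((Finset.erase_subset _ _).trans (Finset.erase_subset _ _)) h2)
          · rw [herase, Finset.insert_comm (l, j), Finset.insert_comm (i, m)] at hor
            obtain ⟨hux, heq⟩ := insert_top_inj hbρ''
              (snd_le_insert (snd_le_insert (snd_le_erase (snd_le_erase hbρ _) _) hjn) hmn) hor
            refine ⟨Or.inl (Or.inr ⟨i, j, l, m, hijρ, hlmρ, hil, hlj, hjm, Or.inr heq⟩),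
              Or.inr ⟨?_, hux⟩⟩
            intro hmem
            rw [heq] at hmem
            rcases mem_pts_insert.1 hmem with h | h | h
            · exact hxp (h ▸ (mem_pts_of_mem hijρ).1)
            · exact hxp (h ▸ (mem_pts_of_mem hlmρ).2)
            · rcases mem_pts_insert.1 h with h2 | h2 | h2
              · exact hxp (h2 ▸ (mem_pts_of_mem hlmρ).1)
              · exact hxp (h2 ▸ (mem_pts_of_mem hijρ).2)
              · exact hxp (pts_mono ((Finset.erase_subset _ _).trans (Finset.erase_subset _ _)) h2)
  · -- ω₂ = insert (x,n+1) ρ is obtained from ω = insert (u,n+1) ρ'' by a move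
    rcases hpred with ⟨i, j, f, hij, hf, hif, hfj, hor⟩ |
      ⟨i, j, l, m, hij, hlm, hil, hlj, hjm, hor⟩
    · -- type 1 move
      rw [hat_fixedPts hρ'' hu] at hf
      obtain ⟨hfu, hffix⟩ := Finset.mem_erase.1 hf
      have hfn : f ≤ n := (mem_fixedPts.1 hffix).1.2
      rcases Finset.mem_insert.1 hij with he | hijρ''
      · have h1 : u = i := (congrArg Prod.fst he).symm
        have h2 : (n + 1 : ℕ) = j := (congrArg Prod.snd he).symm
        subst h1; subst h2
        rcases hor with hor | hor
        · rw [erase_insert_top hbρ''] at hor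
          have hmem : (x, n + 1) ∈ insert (u, f) ρ'' := hor ▸ Finset.mem_insert_self _ _
          rcases Finset.mem_insert.1 hmem with he2 | he2
          · have := congrArg Prod.snd he2; simp only at this; omega
          · exact absurd (hbρ'' _ he2) (by simp)
        · rw [erase_insert_top hbρ''] at hor
          obtain ⟨-, heq⟩ := insert_top_inj hbρ hbρ'' hor
          exact absurd heq.symm hne
      · have hjn : j ≤ n := hbρ'' _ hijρ''
        rcases hor with hor | hor
        · rw [erase_comm_top hjn, Finset.insert_comm] at hor
          obtain ⟨hxu, heq⟩ := insert_top_inj hbρ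
            (snd_le_insert (snd_le_erase hbρ'' _) hfn) hor
          subst hxu
          exact ⟨Or.inr (Or.inl ⟨i, j, f, hijρ'', hffix, hif, hfj, Or.inl heq⟩),
            Or.inr ⟨hup, rfl⟩⟩
        · rw [erase_comm_top hjn, Finset.insert_comm] at hor
          obtain ⟨hxu, heq⟩ := insert_top_inj hbρ
            (snd_le_insert (snd_le_erase hbρ'' _) hjn) hor
          subst hxu
          exact ⟨Or.inr (Or.inl ⟨i, j, f, hijρ'', hffix, hif, hfj, Or.inr heq⟩),
            Or.inr ⟨hup, rfl⟩⟩
    · -- type 2 move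
      rcases Finset.mem_insert.1 hij with he | hijρ''
      · have h2 : j = n + 1 := congrArg Prod.snd he
        have := hsndω _ hlm
        simp only at this
        omega
      · have hjn : j ≤ n := hbρ'' _ hijρ''
        rcases Finset.mem_insert.1 hlm with he | hlmρ''
        · have h1 : u = l := (congrArg Prod.fst he).symm
          have h2 : (n + 1 : ℕ) = m := (congrArg Prod.snd he).symm
          subst h1; subst h2
          have herase : ((insert (u, n + 1) ρ'').erase (i, j)).erase (u, n + 1)
              = ρ''.erase (i, j) := by
            rw [erase_comm_top hjn, erase_insert_top (snd_le_erase hbρ'' _)]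
          rcases hor with hor | hor
          · rw [herase, Finset.insert_comm] at hor
            obtain ⟨hxj, heq⟩ := insert_top_inj hbρ
              (snd_le_insert (snd_le_erase hbρ'' _) (le_of_lt (lt_of_lt_of_le hlj hjn))) hor
            subst hxj
            refine ⟨Or.inr (Or.inl ⟨i, x, u, hijρ'', hu, hil, hlj, Or.inl heq⟩),
              Or.inl ⟨(mem_pts_of_mem hijρ'').2, ?_⟩⟩
            rw [heq]
            exact diff_move_a' hρ'' hijρ'' hu
          · rw [herase] at hor
            obtain ⟨hxi, heq⟩ := insert_top_inj hbρ
              (snd_le_insert (snd_le_erase hbρ'' _) hjn) hor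
            subst hxi
            refine ⟨Or.inr (Or.inl ⟨x, j, u, hijρ'', hu, hil, hlj, Or.inr heq⟩),
              Or.inl ⟨(mem_pts_of_mem hijρ'').1, ?_⟩⟩
            rw [heq]
            exact diff_move_b' hρ'' hijρ'' hu
        · have hmn : m ≤ n := hbρ'' _ hlmρ''
          have herase : ((insert (u, n + 1) ρ'').erase (i, j)).erase (l, m)
              = insert (u, n + 1) ((ρ''.erase (i, j)).erase (l, m)) := by
            rw [erase_comm_top hjn, erase_comm_top hmn]
          rcases hor with hor | hor
          · rw [herase, Finset.insert_comm (j, m), Finset.insert_comm (i, l)] at hor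
            obtain ⟨hxu, heq⟩ := insert_top_inj hbρ
              (snd_le_insert (snd_le_insert (snd_le_erase (snd_le_erase hbρ'' _) _) hmn)
                (le_of_lt (lt_of_lt_of_le hlj hjn))) hor
            subst hxu
            exact ⟨Or.inr (Or.inr ⟨i, j, l, m, hijρ'', hlmρ'', hil, hlj, hjm, Or.inl heq⟩),
              Or.inr ⟨hup, rfl⟩⟩
          · rw [herase, Finset.insert_comm (l, j), Finset.insert_comm (i, m)] at hor
            obtain ⟨hxu, heq⟩ := insert_top_inj hbρ
              (snd_le_insert (snd_le_insert (snd_le_erase (snd_le_erase hbρ'' _) _) hjn) hmn) hor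
            subst hxu
            exact ⟨Or.inr (Or.inr ⟨i, j, l, m, hijρ'', hlmρ'', hil, hlj, hjm, Or.inr heq⟩),
              Or.inr ⟨hup, rfl⟩⟩


/-! ### the lifting lemma -/

lemma lift_adj {n : ℕ} {ρ ρ'' : Finset (ℕ × ℕ)} (hρ : IsLinkPattern n ρ)
    (hρ'' : IsLinkPattern n ρ'') {x : ℕ} (hx : x ∈ fixedPts n ρ) (hadj : Adj n ρ'' ρ) :
    (x ∉ pts ρ'' ∧ Adj (n + 1) (insert (x, n + 1) ρ'') (insert (x, n + 1) ρ)) ∨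
    (x ∈ pts ρ'' ∧ ∃ u, pts ρ \ pts ρ'' = {u} ∧ u ∈ fixedPts n ρ'' ∧
      Adj (n + 1) (insert (u, n + 1) ρ'') (insert (x, n + 1) ρ)) := by
  have hbρ := lp_snd_le hρ
  have hbρ'' := lp_snd_le hρ''
  have hxp := fixed_not_pts hx
  have hxn : x ≤ n := (mem_fixedPts.1 hx).1.2
  have hx1 : 1 ≤ x := (mem_fixedPts.1 hx).1.1
  rcases hadj with (⟨i, j, f, hij, hf, hif, hfj, heq | heq⟩ |
      ⟨i, j, l, m, hij, hlm, hil, hlj, hjm, heq | heq⟩) |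
      (⟨i, j, f, hij, hf, hif, hfj, heq | heq⟩ |
      ⟨i, j, l, m, hij, hlm, hil, hlj, hjm, heq | heq⟩)
  · -- ρ'' = insert (i,f) (ρ.erase (i,j))
    have hjn : j ≤ n := hbρ _ hij
    by_cases hfx : x = f
    · subst hfx
      right
      refine ⟨by rw [heq]; exact mem_pts.2 ⟨(i, x), Finset.mem_insert_self _ _, Or.inr rfl⟩,
        j, by rw [heq]; exact diff_move_a hρ hij hx, ?_, ?_⟩
      · rw [mem_fixedPts]
        refine ⟨⟨by omega, hjn⟩, ?_⟩
        rw [heq, pts_move_a hρ hij hx]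
        intro hmem
        rcases Finset.mem_insert.1 hmem with h | h
        · exact hxp (h ▸ (mem_pts_of_mem hij).2)
        · exact (Finset.mem_erase.1 h).1 rfl
      · left
        right
        refine ⟨i, j, x, n + 1, Finset.mem_insert_of_mem hij, Finset.mem_insert_self _ _,
          hif, hfj, by omega, Or.inl ?_⟩
        rw [erase_comm_top hjn, erase_insert_top (snd_le_erase hbρ _), heq]
        exact Finset.insert_comm _ _ _
    · left
      constructor
      · intro hmem
        rw [heq, pts_move_a hρ hij hf] at hmem
        rcases Finset.mem_insert.1 hmem with h | h
        · exact hfx h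
        · exact hxp (Finset.mem_of_mem_erase h)
      · left
        left
        refine ⟨i, j, f, Finset.mem_insert_of_mem hij, ?_, hif, hfj, Or.inl ?_⟩
        · rw [hat_fixedPts hρ hx]
          exact Finset.mem_erase.2 ⟨fun h => hfx h.symm, hf⟩
        · rw [erase_comm_top hjn, heq]
          exact Finset.insert_comm _ _ _
  · -- ρ'' = insert (f,j) (ρ.erase (i,j))
    have hjn : j ≤ n := hbρ _ hij
    by_cases hfx : x = f
    · subst hfx
      right
      refine ⟨by rw [heq]; exact mem_pts.2 ⟨(x, j), Finset.mem_insert_self _ _, Or.inl rfl⟩,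
        i, by rw [heq]; exact diff_move_b hρ hij hx, ?_, ?_⟩
      · rw [mem_fixedPts]
        refine ⟨⟨(hρ.1 _ hij).1, by omega⟩, ?_⟩
        rw [heq, pts_move_b hρ hij hx]
        intro hmem
        rcases Finset.mem_insert.1 hmem with h | h
        · exact hxp (h ▸ (mem_pts_of_mem hij).1)
        · exact (Finset.mem_erase.1 h).1 rfl
      · left
        right
        refine ⟨i, j, x, n + 1, Finset.mem_insert_of_mem hij, Finset.mem_insert_self _ _,
          hif, hfj, by omega, Or.inr ?_⟩
        rw [erase_comm_top hjn, erase_insert_top (snd_le_erase hbρ _), heq]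
    · left
      constructor
      · intro hmem
        rw [heq, pts_move_b hρ hij hf] at hmem
        rcases Finset.mem_insert.1 hmem with h | h
        · exact hfx h
        · exact hxp (Finset.mem_of_mem_erase h)
      · left
        left
        refine ⟨i, j, f, Finset.mem_insert_of_mem hij, ?_, hif, hfj, Or.inr ?_⟩
        · rw [hat_fixedPts hρ hx]
          exact Finset.mem_erase.2 ⟨fun h => hfx h.symm, hf⟩
        · rw [erase_comm_top hjn, heq]
          exact Finset.insert_comm _ _ _
  · -- ρ'' = insert (i,l) (insert (j,m) ((ρ.erase (i,j)).erase (l,m))) : type 2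
    have hjn : j ≤ n := hbρ _ hij
    have hmn : m ≤ n := hbρ _ hlm
    left
    constructor
    · intro hmem
      rw [heq] at hmem
      rcases mem_pts_insert.1 hmem with h | h | h
      · exact hxp (h ▸ (mem_pts_of_mem hij).1)
      · exact hxp (h ▸ (mem_pts_of_mem hlm).1)
      · rcases mem_pts_insert.1 h with h2 | h2 | h2
        · exact hxp (h2 ▸ (mem_pts_of_mem hij).2)
        · exact hxp (h2 ▸ (mem_pts_of_mem hlm).2)
        · exact hxp (pts_mono ((Finset.erase_subset _ _).trans (Finset.erase_subset _ _)) h2)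
    · left
      right
      refine ⟨i, j, l, m, Finset.mem_insert_of_mem hij, Finset.mem_insert_of_mem hlm,
        hil, hlj, hjm, Or.inl ?_⟩
      rw [erase_comm_top hjn, erase_comm_top hmn, heq,
        Finset.insert_comm (j, m) (x, n + 1), Finset.insert_comm (i, l) (x, n + 1)]
  · -- ρ'' = insert (i,m) (insert (l,j) (...)) : type 2, second variant
    have hjn : j ≤ n := hbρ _ hij
    have hmn : m ≤ n := hbρ _ hlm
    left
    constructor
    · intro hmem
      rw [heq] at hmem
      rcases mem_pts_insert.1 hmem with h | h | h
      · exact hxp (h ▸ (mem_pts_of_mem hij).1)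
      · exact hxp (h ▸ (mem_pts_of_mem hlm).2)
      · rcases mem_pts_insert.1 h with h2 | h2 | h2
        · exact hxp (h2 ▸ (mem_pts_of_mem hlm).1)
        · exact hxp (h2 ▸ (mem_pts_of_mem hij).2)
        · exact hxp (pts_mono ((Finset.erase_subset _ _).trans (Finset.erase_subset _ _)) h2)
    · left
      right
      refine ⟨i, j, l, m, Finset.mem_insert_of_mem hij, Finset.mem_insert_of_mem hlm,
        hil, hlj, hjm, Or.inr ?_⟩
      rw [erase_comm_top hjn, erase_comm_top hmn, heq,
        Finset.insert_comm (l, j) (x, n + 1), Finset.insert_comm (i, m) (x, n + 1)]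
  · -- ρ = insert (i,f) (ρ''.erase (i,j)) : reverse type 1
    have hjn : j ≤ n := hbρ'' _ hij
    have hfρ : (i, f) ∈ ρ := heq ▸ Finset.mem_insert_self _ _
    by_cases hxj : x = j
    · subst hxj
      right
      refine ⟨(mem_pts_of_mem hij).2, f, by rw [heq]; exact diff_move_a' hρ'' hij hf, hf, ?_⟩
      right
      right
      refine ⟨i, x, f, n + 1, Finset.mem_insert_of_mem hij, Finset.mem_insert_self _ _,
        hif, hfj, by omega, Or.inl ?_⟩
      rw [erase_comm_top hjn, erase_insert_top (snd_le_erase hbρ'' _), heq]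
      exact Finset.insert_comm _ _ _
    · have hxp'' : x ∉ pts ρ'' := by
        intro hmem
        apply hxp
        rw [heq, pts_move_a hρ'' hij hf]
        exact Finset.mem_insert_of_mem (Finset.mem_erase.2 ⟨hxj, hmem⟩)
      have hxfix'' : x ∈ fixedPts n ρ'' := mem_fixedPts.2 ⟨⟨hx1, hxn⟩, hxp''⟩
      left
      refine ⟨hxp'', Or.inr (Or.inl ⟨i, j, f, Finset.mem_insert_of_mem hij, ?_, hif, hfj,
        Or.inl ?_⟩)⟩
      · rw [hat_fixedPts hρ'' hxfix'']
        exact Finset.mem_erase.2 ⟨fun h => hxp (h ▸ (mem_pts_of_mem hfρ).2), hf⟩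
      · rw [erase_comm_top hjn, heq]
        exact Finset.insert_comm _ _ _
  · -- ρ = insert (f,j) (ρ''.erase (i,j)) : reverse type 1, second variant
    have hjn : j ≤ n := hbρ'' _ hij
    have hfρ : (f, j) ∈ ρ := heq ▸ Finset.mem_insert_self _ _
    by_cases hxi : x = i
    · subst hxi
      right
      refine ⟨(mem_pts_of_mem hij).1, f, by rw [heq]; exact diff_move_b' hρ'' hij hf, hf, ?_⟩
      right
      right
      refine ⟨x, j, f, n + 1, Finset.mem_insert_of_mem hij, Finset.mem_insert_self _ _,
        hif, hfj, by omega, Or.inr ?_⟩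
      rw [erase_comm_top hjn, erase_insert_top (snd_le_erase hbρ'' _), heq]
    · have hxp'' : x ∉ pts ρ'' := by
        intro hmem
        apply hxp
        rw [heq, pts_move_b hρ'' hij hf]
        exact Finset.mem_insert_of_mem (Finset.mem_erase.2 ⟨hxi, hmem⟩)
      have hxfix'' : x ∈ fixedPts n ρ'' := mem_fixedPts.2 ⟨⟨hx1, hxn⟩, hxp''⟩
      left
      refine ⟨hxp'', Or.inr (Or.inl ⟨i, j, f, Finset.mem_insert_of_mem hij, ?_, hif, hfj,
        Or.inr ?_⟩)⟩
      · rw [hat_fixedPts hρ'' hxfix'']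
        exact Finset.mem_erase.2 ⟨fun h => hxp (h ▸ (mem_pts_of_mem hfρ).1), hf⟩
      · rw [erase_comm_top hjn, heq]
        exact Finset.insert_comm _ _ _
  · -- ρ = insert (i,l) (insert (j,m) ((ρ''.erase (i,j)).erase (l,m))) : reverse type 2
    have hjn : j ≤ n := hbρ'' _ hij
    have hmn : m ≤ n := hbρ'' _ hlm
    have hil' : (i, l) ∈ ρ := heq ▸ Finset.mem_insert_self _ _
    have hjm' : (j, m) ∈ ρ := heq ▸ Finset.mem_insert_of_mem (Finset.mem_insert_self _ _)
    have hxp'' : x ∉ pts ρ'' := by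
      intro hmem
      obtain ⟨p, hp, hor⟩ := mem_pts.1 hmem
      by_cases h1 : p = (i, j)
      · subst h1
        rcases hor with h | h
        · exact hxp (h ▸ (mem_pts_of_mem hil').1)
        · exact hxp (h ▸ (mem_pts_of_mem hjm').1)
      · by_cases h2 : p = (l, m)
        · subst h2
          rcases hor with h | h
          · exact hxp (h ▸ (mem_pts_of_mem hil').2)
          · exact hxp (h ▸ (mem_pts_of_mem hjm').2)
        · have hpρ : p ∈ ρ := by
            rw [heq]
            exact Finset.mem_insert_of_mem (Finset.mem_insert_of_mem
              (Finset.mem_erase.2 ⟨h2, Finset.mem_erase.2 ⟨h1, hp⟩⟩))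
          exact hxp (mem_pts.2 ⟨p, hpρ, hor⟩)
    have hxfix'' : x ∈ fixedPts n ρ'' := mem_fixedPts.2 ⟨⟨hx1, hxn⟩, hxp''⟩
    left
    refine ⟨hxp'', Or.inr (Or.inr ⟨i, j, l, m, Finset.mem_insert_of_mem hij,
      Finset.mem_insert_of_mem hlm, hil, hlj, hjm, Or.inl ?_⟩)⟩
    rw [erase_comm_top hjn, erase_comm_top hmn, heq,
      Finset.insert_comm (j, m) (x, n + 1), Finset.insert_comm (i, l) (x, n + 1)]
  · -- ρ = insert (i,m) (insert (l,j) (...)) : reverse type 2, second variant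
    have hjn : j ≤ n := hbρ'' _ hij
    have hmn : m ≤ n := hbρ'' _ hlm
    have hil' : (i, m) ∈ ρ := heq ▸ Finset.mem_insert_self _ _
    have hjm' : (l, j) ∈ ρ := heq ▸ Finset.mem_insert_of_mem (Finset.mem_insert_self _ _)
    have hxp'' : x ∉ pts ρ'' := by
      intro hmem
      obtain ⟨p, hp, hor⟩ := mem_pts.1 hmem
      by_cases h1 : p = (i, j)
      · subst h1
        rcases hor with h | h
        · exact hxp (h ▸ (mem_pts_of_mem hil').1)
        · exact hxp (h ▸ (mem_pts_of_mem hjm').2)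
      · by_cases h2 : p = (l, m)
        · subst h2
          rcases hor with h | h
          · exact hxp (h ▸ (mem_pts_of_mem hjm').1)
          · exact hxp (h ▸ (mem_pts_of_mem hil').2)
        · have hpρ : p ∈ ρ := by
            rw [heq]
            exact Finset.mem_insert_of_mem (Finset.mem_insert_of_mem
              (Finset.mem_erase.2 ⟨h2, Finset.mem_erase.2 ⟨h1, hp⟩⟩))
          exact hxp (mem_pts.2 ⟨p, hpρ, hor⟩)
    have hxfix'' : x ∈ fixedPts n ρ'' := mem_fixedPts.2 ⟨⟨hx1, hxn⟩, hxp''⟩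
    left
    refine ⟨hxp'', Or.inr (Or.inr ⟨i, j, l, m, Finset.mem_insert_of_mem hij,
      Finset.mem_insert_of_mem hlm, hil, hlj, hjm, Or.inr ?_⟩)⟩
    rw [erase_comm_top hjn, erase_comm_top hmn, heq,
      Finset.insert_comm (l, j) (x, n + 1), Finset.insert_comm (i, m) (x, n + 1)]


/-! ### decomposition of elements below a completion -/

lemma mem_allSub {n : ℕ} {ω : Finset (ℕ × ℕ)} (hω : IsLinkPattern n ω) : ω ∈ allSub n := by
  rw [allSub, Finset.mem_powerset]
  intro p hp
  obtain ⟨h1, h2, h3⟩ := hω.1 p hp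
  rw [Finset.mem_product, Finset.mem_Icc, Finset.mem_Icc]
  exact ⟨⟨h1, by omega⟩, ⟨by omega, h3⟩⟩

lemma filter_hat {n u : ℕ} {ρ'' : Finset (ℕ × ℕ)} (hb : ∀ p ∈ ρ'', p.2 ≤ n) :
    (insert (u, n + 1) ρ'').filter (fun p => p.2 ≤ n) = ρ'' := by
  rw [Finset.filter_insert, if_neg (by simp)]
  exact Finset.filter_true_of_mem hb

lemma RInt_eq_card {n : ℕ} {σ : Finset (ℕ × ℕ)} (hσ : IsLinkPattern n σ) :
    RInt σ 1 n = σ.card := by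
  unfold RInt
  rw [Finset.filter_true_of_mem (fun p hp => ⟨(hσ.1 p hp).1, (hσ.1 p hp).2.2⟩)]

lemma decomp {n k : ℕ} {σ : Finset (ℕ × ℕ)} (hσ : IsLinkPattern n σ) (hσk : σ.card = k)
    {g : ℕ} (hg : g ∈ fixedPts n σ) {ω : Finset (ℕ × ℕ)} (hω : IsLinkPattern (n + 1) ω)
    (hωk : ω.card = k + 1) (hle : lpLE (n + 1) ω (insert (g, n + 1) σ)) :
    ∃ u ρ'', ω = insert (u, n + 1) ρ'' ∧ IsLinkPattern n ρ'' ∧ ρ''.card = k ∧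
      u ∈ fixedPts n ρ'' ∧ lpLE n ρ'' σ ∧ (u, n + 1) ∉ ρ'' := by
  have hbσ := lp_snd_le hσ
  -- there is an arc at n+1
  have htop : ∃ u, (u, n + 1) ∈ ω := by
    by_contra hcon
    push_neg at hcon
    have hb : ∀ p ∈ ω, p.2 ≤ n := by
      intro p hp
      have h1 := (hω.1 p hp).2.2
      rcases Nat.lt_or_ge p.2 (n + 1) with h | h
      · omega
      · exact absurd (show p = (p.1, n + 1) from Prod.ext rfl (by omega)) (by
          intro he; exact hcon p.1 (he ▸ hp))
    rcases Nat.lt_or_ge 1 n with hn | hn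
    · have := hle 1 n (le_refl _) hn (by omega)
      rw [RInt_insert_hat hbσ (le_refl n)] at this
      have h1 : RInt ω 1 n = k + 1 := by
        unfold RInt
        rw [Finset.filter_true_of_mem (fun p hp => ⟨(hω.1 p hp).1, hb p hp⟩), hωk]
      rw [h1, RInt_eq_card hσ, hσk] at this
      omega
    · -- n ≤ 1 : then n = 1 since fixedPts nonempty, and no arcs fit in [1,1]
      have hn1 : n = 1 := by
        have := (mem_fixedPts.1 hg).1
        omega
      obtain ⟨p, hp⟩ := Finset.card_pos.1 (show 0 < ω.card by omega)
      obtain ⟨h1, h2, h3⟩ := hω.1 p hp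
      have := hb p hp
      omega
  obtain ⟨u, hu⟩ := htop
  refine ⟨u, ω.erase (u, n + 1), (Finset.insert_erase hu).symm, ?_, ?_, ?_, ?_, ?_⟩
  · -- link pattern on n
    constructor
    · intro p hp
      have hp' := Finset.mem_of_mem_erase hp
      obtain ⟨h1, h2, h3⟩ := hω.1 p hp'
      refine ⟨h1, h2, ?_⟩
      rcases Nat.lt_or_ge p.2 (n + 1) with h | h
      · omega
      · exfalso
        have hpe : p = (p.1, n + 1) := Prod.ext rfl (by omega)
        have : p.1 = u := arc_at_top_unique hω (hpe ▸ hp') hu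
        exact (Finset.mem_erase.1 hp).1 (by rw [hpe, this])
    · intro p hp q hq hpq
      exact hω.2 p (Finset.mem_of_mem_erase hp) q (Finset.mem_of_mem_erase hq) hpq
  · rw [Finset.card_erase_of_mem hu, hωk]
    omega
  · -- u fixed in the rest
    rw [mem_fixedPts]
    obtain ⟨h1, h2, h3⟩ := hω.1 _ hu
    refine ⟨⟨h1, by simp only at h2; omega⟩, ?_⟩
    intro hmem
    obtain ⟨p, hp, hor⟩ := mem_pts.1 hmem
    have hne : p ≠ (u, n + 1) := (Finset.mem_erase.1 hp).1
    have hd := hω.2 p (Finset.mem_of_mem_erase hp) _ hu hne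
    rcases hor with h | h <;> simp_all
  · -- order
    intro a b ha hab hbn
    have hb2 : ∀ p ∈ ω.erase (u, n + 1), p.2 ≤ n := by
      intro p hp
      obtain ⟨h1, h2, h3⟩ := hω.1 p (Finset.mem_of_mem_erase hp)
      rcases Nat.lt_or_ge p.2 (n + 1) with h | h
      · omega
      · exfalso
        have hpe : p = (p.1, n + 1) := Prod.ext rfl (by omega)
        have : p.1 = u := arc_at_top_unique hω (hpe ▸ Finset.mem_of_mem_erase hp) hu
        exact (Finset.mem_erase.1 hp).1 (by rw [hpe, this])
    have := hle a b ha hab (by omega)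
    rw [RInt_insert_hat hbσ hbn] at this
    have he : RInt ω a b = RInt (ω.erase (u, n + 1)) a b := by
      rw [← Finset.insert_erase hu, RInt_insert_hat hb2 hbn]
      rw [Finset.insert_erase hu]
    omega
  · exact fun h => (Finset.mem_erase.1 h).1 rfl


/-! ### the main counting lemma -/

lemma aNum_hat {n k : ℕ} {σ ρ : Finset (ℕ × ℕ)} (hσ : IsLinkPattern n σ) (hσk : σ.card = k)
    (hnk : 2 * k < n) {g : ℕ} (hg : g ∈ fixedPts n σ) (hgmax : ∀ f ∈ fixedPts n σ, f ≤ g)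
    (hρ : IsLinkPattern n ρ) (hρk : ρ.card = k) (hρle : lpLE n ρ σ)
    {x : ℕ} (hx : x ∈ fixedPts n ρ) :
    aNum (n + 1) (k + 1) (insert (g, n + 1) σ) (insert (x, n + 1) ρ)
      = aNum n k σ ρ + (n - 2 * k - 1) := by
  classical
  have hbσ := lp_snd_le hσ
  have hbρ := lp_snd_le hρ
  have hx1 : 1 ≤ x := (mem_fixedPts.1 hx).1.1
  have hxn : x ≤ n := (mem_fixedPts.1 hx).1.2
  unfold aNum
  set Tset := (allSub (n + 1)).filter (fun ω => IsLinkPattern (n + 1) ω ∧ ω.card = k + 1 ∧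
    lpLE (n + 1) ω (insert (g, n + 1) σ) ∧
    (IsPredecessor (n + 1) ω (insert (x, n + 1) ρ) ∨
     IsPredecessor (n + 1) (insert (x, n + 1) ρ) ω)) with hTset
  set Sset := (allSub n).filter (fun ω => IsLinkPattern n ω ∧ ω.card = k ∧ lpLE n ω σ ∧
    (IsPredecessor n ω ρ ∨ IsPredecessor n ρ ω)) with hSset
  have hsplit := Finset.card_filter_add_card_filter_not
    (s := Tset) (p := fun ω => ρ ⊆ ω)
  -- membership unfolding for Tset
  have hmemT : ∀ ω, ω ∈ Tset ↔ (ω ∈ allSub (n + 1) ∧ IsLinkPattern (n + 1) ω ∧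
      ω.card = k + 1 ∧ lpLE (n + 1) ω (insert (g, n + 1) σ) ∧
      Adj (n + 1) ω (insert (x, n + 1) ρ)) := by
    intro ω
    rw [hTset, Finset.mem_filter]
    exact Iff.rfl
  have hmemS : ∀ ω', ω' ∈ Sset ↔ (ω' ∈ allSub n ∧ IsLinkPattern n ω' ∧
      ω'.card = k ∧ lpLE n ω' σ ∧ Adj n ω' ρ) := by
    intro ω'
    rw [hSset, Finset.mem_filter]
    exact Iff.rfl
  -- Part 1 : the extra elements
  have h1 : Tset.filter (fun ω => ρ ⊆ ω)
      = ((fixedPts n ρ).erase x).image (fun f' => insert (f', n + 1) ρ) := by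
    ext ω
    rw [Finset.mem_filter, hmemT]
    constructor
    · rintro ⟨⟨hall, hLP, hcard, hle, hadj⟩, hsub⟩
      obtain ⟨u, ρ'', hωeq, hρ''LP, hρ''k, hufix, hρ''le, hnm⟩ :=
        decomp hσ hσk hg hLP hcard hle
      have hρρ'' : ρ = ρ'' := by
        apply Finset.eq_of_subset_of_card_le _ (by rw [hρ''k, hρk])
        intro p hp
        have := hsub hp
        rw [hωeq] at this
        rcases Finset.mem_insert.1 this with he | he
        · exact absurd (hbρ p hp) (by rw [he]; simp)
        · exact he
      subst hρρ''
      have hune : u ≠ x := by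
        intro he
        rw [he] at hωeq
        rw [hωeq] at hadj
        exact not_adj_self hadj
      rw [Finset.mem_image]
      exact ⟨u, Finset.mem_erase.2 ⟨hune, hufix⟩, hωeq.symm⟩
    · rw [Finset.mem_image]
      rintro ⟨f', hf', rfl⟩
      obtain ⟨hfne, hffix⟩ := Finset.mem_erase.1 hf'
      refine ⟨⟨mem_allSub (hat_isLP hρ hffix), hat_isLP hρ hffix, ?_, ?_, ?_⟩,
        Finset.subset_insert _ _⟩
      · rw [hat_card hbρ, hρk]
      · exact hat_le_hat hρ hσ (by rw [hρk, hσk]) hffix hg hgmax hρle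
      · exact class_self hρ hx hffix hfne
  have h1card : (Tset.filter (fun ω => ρ ⊆ ω)).card = n - 2 * k - 1 := by
    rw [h1, Finset.card_image_of_injOn, Finset.card_erase_of_mem hx]
    · have := fixedPts_card hρ
      rw [hρk] at this
      omega
    · intro a ha b hb hab
      exact (insert_top_inj hbρ hbρ hab).1
  -- Part 2 : the bijection with Sset
  have h2card : (Tset.filter (fun ω => ¬ ρ ⊆ ω)).card = Sset.card := by
    apply Finset.card_bij' (fun ω _ => ω.filter (fun p => p.2 ≤ n))
      (fun ω' _ => insert ((if x ∈ pts ω' then (pts ρ \ pts ω').sum id else x), n + 1) ω')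
    · -- forward map lands in Sset
      intro ω hω
      rw [Finset.mem_filter, hmemT] at hω
      obtain ⟨⟨hall, hLP, hcard, hle, hadj⟩, hnsub⟩ := hω
      obtain ⟨u, ρ'', hωeq, hρ''LP, hρ''k, hufix, hρ''le, hnm⟩ :=
        decomp hσ hσk hg hLP hcard hle
      have hfilter : ω.filter (fun p => p.2 ≤ n) = ρ'' := by
        rw [hωeq]
        exact filter_hat (lp_snd_le hρ''LP)
      have hne'' : ρ'' ≠ ρ := by
        intro he
        apply hnsub
        rw [hωeq, he]
        exact Finset.subset_insert _ _
      have hadj' : Adj (n + 1) (insert (u, n + 1) ρ'') (insert (x, n + 1) ρ) := by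
        rw [← hωeq]; exact hadj
      have hclass := class_adj hρ hρ''LP hx hufix hne'' hadj'
      rw [hfilter, hmemS]
      exact ⟨mem_allSub hρ''LP, hρ''LP, hρ''k, hρ''le, hclass.1⟩
    · -- backward map lands in Tset \ superset part
      intro ω' hω'
      rw [hmemS] at hω'
      obtain ⟨hall', hLP', hcard', hle', hadj'⟩ := hω'
      have hbω' := lp_snd_le hLP'
      have hne' : ω' ≠ ρ := by
        intro he
        rw [he] at hadj'
        exact not_adj_self hadj'
      have hnsub : ∀ v : ℕ, ¬ ρ ⊆ insert (v, n + 1) ω' := by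
        intro v hs
        apply hne'
        symm
        apply Finset.eq_of_subset_of_card_le _ (by rw [hcard', hρk])
        intro p hp
        rcases Finset.mem_insert.1 (hs hp) with he | he
        · exact absurd (hbρ p hp) (by rw [he]; simp)
        · exact he
      rcases lift_adj hρ hLP' hx hadj' with ⟨hxnot, hAdj⟩ | ⟨hxin, u, hdiff, hufix, hAdj⟩
      · have hatt : (if x ∈ pts ω' then (pts ρ \ pts ω').sum id else x) = x := if_neg hxnot
        rw [hatt]
        have hxfix' : x ∈ fixedPts n ω' := mem_fixedPts.2 ⟨⟨hx1, hxn⟩, hxnot⟩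
        rw [Finset.mem_filter, hmemT]
        exact ⟨⟨mem_allSub (hat_isLP hLP' hxfix'), hat_isLP hLP' hxfix',
          by rw [hat_card hbω', hcard'],
          hat_le_hat hLP' hσ (by rw [hcard', hσk]) hxfix' hg hgmax hle', hAdj⟩, hnsub x⟩
      · have hatt : (if x ∈ pts ω' then (pts ρ \ pts ω').sum id else x) = u := by
          rw [if_pos hxin, hdiff]
          simp
        rw [hatt]
        rw [Finset.mem_filter, hmemT]
        exact ⟨⟨mem_allSub (hat_isLP hLP' hufix), hat_isLP hLP' hufix,
          by rw [hat_card hbω', hcard'],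
          hat_le_hat hLP' hσ (by rw [hcard', hσk]) hufix hg hgmax hle', hAdj⟩, hnsub u⟩
    · -- left inverse
      intro ω hω
      rw [Finset.mem_filter, hmemT] at hω
      obtain ⟨⟨hall, hLP, hcard, hle, hadj⟩, hnsub⟩ := hω
      obtain ⟨u, ρ'', hωeq, hρ''LP, hρ''k, hufix, hρ''le, hnm⟩ :=
        decomp hσ hσk hg hLP hcard hle
      have hfilter : ω.filter (fun p => p.2 ≤ n) = ρ'' := by
        rw [hωeq]
        exact filter_hat (lp_snd_le hρ''LP)
      have hne'' : ρ'' ≠ ρ := by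
        intro he
        apply hnsub
        rw [hωeq, he]
        exact Finset.subset_insert _ _
      have hadj' : Adj (n + 1) (insert (u, n + 1) ρ'') (insert (x, n + 1) ρ) := by
        rw [← hωeq]; exact hadj
      have hclass := class_adj hρ hρ''LP hx hufix hne'' hadj'
      have hatt : (if x ∈ pts (ω.filter (fun p => p.2 ≤ n)) then
          (pts ρ \ pts (ω.filter (fun p => p.2 ≤ n))).sum id else x) = u := by
        rw [hfilter]
        rcases hclass.2 with ⟨hxin, hdiff⟩ | ⟨hxnot, hux⟩
        · rw [if_pos hxin, hdiff]
          simp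
        · rw [if_neg hxnot, hux]
      rw [hatt, hfilter, ← hωeq]
    · -- right inverse
      intro ω' hω'
      rw [hmemS] at hω'
      exact filter_hat (lp_snd_le hω'.2.1)
  omega


/-! ### final assembly -/

lemma lpLE_refl (n : ℕ) (τ : Finset (ℕ × ℕ)) : lpLE n τ τ := fun _ _ _ _ _ => le_refl _

lemma fixedPts_nonempty {n k : ℕ} {τ : Finset (ℕ × ℕ)} (hτ : IsLinkPattern n τ)
    (hτk : τ.card = k) (hnk : 2 * k < n) : (fixedPts n τ).Nonempty := by
  rw [← Finset.card_pos]
  have := fixedPts_card hτ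
  omega

/-- (0,1)-maximal completion preserves the order, the codimension
`b+c` and the quantity `a_{σ,υ} - p_σ`, and `Sing(σ̂)` consists exactly of the
(0,1)-maximal completions of the elements of `Sing(σ)`. -/
theorem maximal_completion (n k : ℕ) (σ υ : Finset (ℕ × ℕ))
    (hσ : IsLinkPattern n σ) (hσk : σ.card = k)
    (hυ : IsLinkPattern n υ) (hυk : υ.card = k) (hnk : 2 * k < n)
    (fσ fυ : ℕ)
    (hfσ : fσ ∈ fixedPts n σ) (hfσmax : ∀ g ∈ fixedPts n σ, g ≤ fσ)
    (hfυ : fυ ∈ fixedPts n υ) (hfυmax : ∀ g ∈ fixedPts n υ, g ≤ fυ) :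
    (lpLE n υ σ ↔ lpLE (n + 1) (insert (fυ, n + 1) υ) (insert (fσ, n + 1) σ)) ∧
    (lpLE n υ σ →
      bridges (n + 1) (insert (fυ, n + 1) υ) + crossings (insert (fυ, n + 1) υ)
          + (bridges n σ + crossings σ)
        = bridges n υ + crossings υ
          + (bridges (n + 1) (insert (fσ, n + 1) σ) + crossings (insert (fσ, n + 1) σ)) ∧
      aNum (n + 1) (k + 1) (insert (fσ, n + 1) σ) (insert (fυ, n + 1) υ) + pNum n k σ
        = aNum n k σ υ + pNum (n + 1) (k + 1) (insert (fσ, n + 1) σ)) ∧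
    (∀ ω : Finset (ℕ × ℕ),
      InSing (n + 1) (k + 1) (insert (fσ, n + 1) σ) ω ↔
        ∃ τ g, InSing n k σ τ ∧ g ∈ fixedPts n τ ∧ (∀ g' ∈ fixedPts n τ, g' ≤ g) ∧
          ω = insert (g, n + 1) τ) := by
  have hbσ := lp_snd_le hσ
  have hbυ := lp_snd_le hυ
  have hd := pNum_hat hσ hσk hnk hfσ hfσmax
  refine ⟨⟨fun h => hat_le_hat hυ hσ (by rw [hυk, hσk]) hfυ hfσ hfσmax h,
    fun h => hat_le_rev hbυ hbσ h⟩, fun hle => ⟨?_, ?_⟩, ?_⟩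
  · have h1 := hat_bc hυ hfυ hfυmax
    have h2 := hat_bc hσ hfσ hfσmax
    omega
  · have h3 := aNum_hat hσ hσk hnk hfσ hfσmax hυ hυk hle hfυ
    omega
  · intro ω
    constructor
    · -- forward: every element of Sing(σ̂) is a maximal completion
      rintro ⟨hLP, hcard, hle, hsing, hmax⟩
      obtain ⟨u, ρ'', hωeq, hρ''LP, hρ''k, hufix, hρ''le, hnm⟩ :=
        decomp hσ hσk hfσ hLP hcard hle
      have haN := aNum_hat hσ hσk hnk hfσ hfσmax hρ''LP hρ''k hρ''le hufix
      rw [← hωeq] at haN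
      have hsing'' : IsSingularPt n k σ ρ'' := by
        rw [IsSingularPt] at hsing ⊢
        omega
      -- maximality of ρ'' among singular points of σ
      have hmax'' : ∀ τ₂ : Finset (ℕ × ℕ), IsLinkPattern n τ₂ → τ₂.card = k →
          lpLE n τ₂ σ → IsSingularPt n k σ τ₂ → lpLE n ρ'' τ₂ → τ₂ = ρ'' := by
        intro τ₂ hτ₂LP hτ₂k hτ₂le hτ₂sing hρ''τ₂
        have hne : (fixedPts n τ₂).Nonempty := fixedPts_nonempty hτ₂LP hτ₂k hnk
        set g₂ := (fixedPts n τ₂).max' hne with hg₂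
        have hg₂fix : g₂ ∈ fixedPts n τ₂ := (fixedPts n τ₂).max'_mem hne
        have hg₂max : ∀ f ∈ fixedPts n τ₂, f ≤ g₂ := fun f hf => Finset.le_max' _ f hf
        have haN₂ := aNum_hat hσ hσk hnk hfσ hfσmax hτ₂LP hτ₂k hτ₂le hg₂fix
        have heq2 := hmax (insert (g₂, n + 1) τ₂) (hat_isLP hτ₂LP hg₂fix)
          (by rw [hat_card (lp_snd_le hτ₂LP), hτ₂k])
          (hat_le_hat hτ₂LP hσ (by rw [hτ₂k, hσk]) hg₂fix hfσ hfσmax hτ₂le)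
          (by rw [IsSingularPt] at hτ₂sing ⊢; omega)
          (by rw [hωeq]
              exact hat_le_hat hρ''LP hτ₂LP (by rw [hρ''k, hτ₂k]) hufix hg₂fix hg₂max hρ''τ₂)
        rw [hωeq] at heq2
        exact (insert_top_inj (lp_snd_le hτ₂LP) (lp_snd_le hρ''LP) heq2).2
      -- u is the maximal fixed point of ρ''
      have hneρ'' : (fixedPts n ρ'').Nonempty := fixedPts_nonempty hρ''LP hρ''k hnk
      set gm := (fixedPts n ρ'').max' hneρ'' with hgm
      have hgmfix : gm ∈ fixedPts n ρ'' := (fixedPts n ρ'').max'_mem hneρ''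
      have hgmmax : ∀ f ∈ fixedPts n ρ'', f ≤ gm := fun f hf => Finset.le_max' _ f hf
      have haNm := aNum_hat hσ hσk hnk hfσ hfσmax hρ''LP hρ''k hρ''le hgmfix
      have heqm := hmax (insert (gm, n + 1) ρ'') (hat_isLP hρ''LP hgmfix)
        (by rw [hat_card (lp_snd_le hρ''LP), hρ''k])
        (hat_le_hat hρ''LP hσ (by rw [hρ''k, hσk]) hgmfix hfσ hfσmax hρ''le)
        (by rw [IsSingularPt] at hsing'' ⊢; omega)
        (by rw [hωeq]
            exact hat_le_hat hρ''LP hρ''LP rfl hufix hgmfix hgmmax (lpLE_refl n ρ''))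
      rw [hωeq] at heqm
      have hgmu := (insert_top_inj (lp_snd_le hρ''LP) (lp_snd_le hρ''LP) heqm).1
      refine ⟨ρ'', u, ⟨hρ''LP, hρ''k, hρ''le, hsing'', hmax''⟩, hufix, ?_, hωeq⟩
      intro g' hg'
      rw [← hgmu]
      exact hgmmax g' hg'
    · -- backward: maximal completions of Sing(σ) are in Sing(σ̂)
      rintro ⟨τ, g', ⟨hτLP, hτk, hτle, hτsing, hτmax⟩, hg'fix, hg'max, rfl⟩
      have hbτ := lp_snd_le hτLP
      have haN := aNum_hat hσ hσk hnk hfσ hfσmax hτLP hτk hτle hg'fix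
      refine ⟨hat_isLP hτLP hg'fix, by rw [hat_card hbτ, hτk],
        hat_le_hat hτLP hσ (by rw [hτk, hσk]) hg'fix hfσ hfσmax hτle,
        by rw [IsSingularPt] at hτsing ⊢; omega, ?_⟩
      intro ω₂ hω₂LP hω₂k hω₂le hω₂sing hleω₂
      obtain ⟨x₂, ρ₂, hω₂eq, hρ₂LP, hρ₂k, hx₂fix, hρ₂le, hnm₂⟩ :=
        decomp hσ hσk hfσ hω₂LP hω₂k hω₂le
      have haN₂ := aNum_hat hσ hσk hnk hfσ hfσmax hρ₂LP hρ₂k hρ₂le hx₂fix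
      rw [← hω₂eq] at haN₂
      have hρ₂sing : IsSingularPt n k σ ρ₂ := by
        rw [IsSingularPt] at hω₂sing ⊢
        omega
      have hτρ₂ : lpLE n τ ρ₂ := by
        apply hat_le_rev hbτ (lp_snd_le hρ₂LP) (x := g') (g := x₂)
        rw [← hω₂eq]
        exact hleω₂
      have hρ₂τ : ρ₂ = τ := hτmax ρ₂ hρ₂LP hρ₂k hρ₂le hρ₂sing hτρ₂
      subst hρ₂τ
      -- now show x₂ = g'
      have hx₂g' : x₂ ≤ g' := hg'max x₂ hx₂fix
      have hg'x₂ : g' ≤ x₂ := by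
        by_contra hcon
        push_neg at hcon
        have hg'n : g' ≤ n := (mem_fixedPts.1 hg'fix).1.2
        have := hleω₂ (x₂ + 1) (n + 1) (by omega) (by omega) (le_refl _)
        rw [hω₂eq, RInt_insert_top hbτ, RInt_insert_top hbτ,
          if_pos (by omega : x₂ + 1 ≤ g'), if_neg (by omega : ¬ x₂ + 1 ≤ x₂)] at this
        omega
      have : x₂ = g' := by omega
      rw [hω₂eq, this]


end LinkPatterns
end

section
/- Let σ ∈ I_{n,k}^max with ρ(σ) ≥ 4, let ω ∈ Sing(σ), and suppose there exist f ∈ ω⁰ and an arc (i,j) ∈ ω with i<f<j such that both ω⁻_{(i,j)}(i,f) ≤ σ and ω⁻_{(i,j)}(f,j) ≤ σ. Let k₁ = #{(i,j) ∈ σ : i<f<j} and S = {(i,j) ∈ ω : i<f<j}. Then |S| ≥ k₁ + 2. -/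
/- Link patterns: an involution in `I_{n,k}` (k disjoint 2-cycles in S_n) is identified
with its set of arcs, a finset of pairs `(i,j)` with `1 ≤ i < j ≤ n`, pairwise disjoint
endpoints, of cardinality `k`. -/

attribute [local instance] Classical.propDecidable

namespace LinkPatterns

/-- for maximal `σ` with `ρ(σ) ≥ 4`, `ω ∈ Sing(σ)` with an arc `(a,b)` over a
fixed point `f` such that both corresponding predecessors are `≤ σ`, the set
`S = {(i,j) ∈ ω : i < f < j}` satisfies `|S| ≥ k₁ + 2`, where
`k₁ = #{(i,j) ∈ σ : i < f < j}`. -/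
theorem sing_bridge_card (n k : ℕ) (hnk : 2 * k ≤ n) (σ ω : Finset (ℕ × ℕ))
    (hσ : IsMaximal n σ) (hσk : σ.card = k) (hρ : 4 ≤ rho n σ)
    (hω : InSing n k σ ω)
    (f a b : ℕ) (hf : f ∈ fixedPts n ω) (hab : (a, b) ∈ ω)
    (haf : a < f) (hfb : f < b)
    (h₁ : lpLE n (insert (a, f) (ω.erase (a, b))) σ)
    (h₂ : lpLE n (insert (f, b) (ω.erase (a, b))) σ) :
    (σ.filter (fun p => p.1 < f ∧ f < p.2)).card + 2 ≤
      (ω.filter (fun p => p.1 < f ∧ f < p.2)).card := by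
  obtain ⟨hσlp, -, -⟩ := hσ
  obtain ⟨hωlp, hωk, -, -, -⟩ := hω
  simp only [fixedPts, Finset.mem_filter, Finset.mem_Icc] at hf
  obtain ⟨⟨hf1, hfn⟩, hffix⟩ := hf
  have ha1 : 1 ≤ a := (hωlp.1 _ hab).1
  have hbn : b ≤ n := (hωlp.1 _ hab).2.2
  have h1f : 1 < f := lt_of_le_of_lt ha1 haf
  have hfn' : f < n := lt_of_lt_of_le hfb hbn
  -- splitting lemma: for a link pattern τ on [1,n],
  -- card = (arcs in [1,f]) + (arcs in [f,n]) + (arcs over f)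
  have split : ∀ τ : Finset (ℕ × ℕ), IsLinkPattern n τ →
      τ.card = RInt τ 1 f + RInt τ f n
        + (τ.filter (fun p => p.1 < f ∧ f < p.2)).card := by
    intro τ hτ
    have e1 : RInt τ 1 f = (τ.filter (fun p => p.2 ≤ f)).card := by
      unfold RInt
      congr 1
      apply Finset.filter_congr
      intro p hp
      have h := (hτ.1 p hp).1
      simp [h]
    have e2 : RInt τ f n = (τ.filter (fun p => f ≤ p.1)).card := by
      unfold RInt
      congr 1
      apply Finset.filter_congr
      intro p hp
      have h := (hτ.1 p hp).2.2
      simp [h]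
    have key := Finset.card_filter_add_card_filter_not
      (s := τ) (p := fun p : ℕ × ℕ => p.2 ≤ f)
    have key2 := Finset.card_filter_add_card_filter_not
      (s := τ.filter (fun p : ℕ × ℕ => ¬ p.2 ≤ f)) (p := fun p : ℕ × ℕ => f ≤ p.1)
    have e3 : (τ.filter (fun p : ℕ × ℕ => ¬ p.2 ≤ f)).filter (fun p : ℕ × ℕ => f ≤ p.1)
        = τ.filter (fun p => f ≤ p.1) := by
      rw [Finset.filter_filter]
      apply Finset.filter_congr
      intro p hp
      have h := (hτ.1 p hp).2.1
      constructor
      · exact fun hx => hx.2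
      · exact fun hx => ⟨by omega, hx⟩
    have e4 : (τ.filter (fun p : ℕ × ℕ => ¬ p.2 ≤ f)).filter (fun p : ℕ × ℕ => ¬ f ≤ p.1)
        = τ.filter (fun p => p.1 < f ∧ f < p.2) := by
      rw [Finset.filter_filter]
      apply Finset.filter_congr
      intro p hp
      constructor
      · exact fun hx => ⟨by omega, by omega⟩
      · exact fun hx => ⟨by omega, by omega⟩
    rw [e3, e4] at key2
    rw [e1, e2]
    omega
  -- the two inequalities from h₁ and h₂
  have hins1 : RInt ω 1 f + 1 ≤ RInt σ 1 f := by
    have h := h₁ 1 f le_rfl h1f hfn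
    refine le_trans ?_ h
    unfold RInt
    have hnotmem : (a, f) ∉ ω.filter (fun p : ℕ × ℕ => 1 ≤ p.1 ∧ p.2 ≤ f) := by
      intro hmem
      exact (hffix _ (Finset.mem_filter.mp hmem).1).2 rfl
    have hsub : insert (a, f) (ω.filter (fun p : ℕ × ℕ => 1 ≤ p.1 ∧ p.2 ≤ f)) ⊆
        (insert (a, f) (ω.erase (a, b))).filter (fun p : ℕ × ℕ => 1 ≤ p.1 ∧ p.2 ≤ f) := by
      intro p hp
      rcases Finset.mem_insert.mp hp with rfl | hp
      · exact Finset.mem_filter.mpr ⟨Finset.mem_insert_self _ _, ha1, le_rfl⟩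
      · obtain ⟨hpω, hP⟩ := Finset.mem_filter.mp hp
        refine Finset.mem_filter.mpr
          ⟨Finset.mem_insert_of_mem (Finset.mem_erase.mpr ⟨?_, hpω⟩), hP⟩
        rintro rfl
        exact absurd hP.2 (not_le.mpr hfb)
    calc (ω.filter (fun p : ℕ × ℕ => 1 ≤ p.1 ∧ p.2 ≤ f)).card + 1
        = (insert (a, f) (ω.filter (fun p : ℕ × ℕ => 1 ≤ p.1 ∧ p.2 ≤ f))).card :=
          (Finset.card_insert_of_notMem hnotmem).symm
      _ ≤ _ := Finset.card_le_card hsub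
  have hins2 : RInt ω f n + 1 ≤ RInt σ f n := by
    have h := h₂ f n hf1 hfn' le_rfl
    refine le_trans ?_ h
    unfold RInt
    have hnotmem : (f, b) ∉ ω.filter (fun p : ℕ × ℕ => f ≤ p.1 ∧ p.2 ≤ n) := by
      intro hmem
      exact (hffix _ (Finset.mem_filter.mp hmem).1).1 rfl
    have hsub : insert (f, b) (ω.filter (fun p : ℕ × ℕ => f ≤ p.1 ∧ p.2 ≤ n)) ⊆
        (insert (f, b) (ω.erase (a, b))).filter (fun p : ℕ × ℕ => f ≤ p.1 ∧ p.2 ≤ n) := by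
      intro p hp
      rcases Finset.mem_insert.mp hp with rfl | hp
      · exact Finset.mem_filter.mpr ⟨Finset.mem_insert_self _ _, le_rfl, hbn⟩
      · obtain ⟨hpω, hP⟩ := Finset.mem_filter.mp hp
        refine Finset.mem_filter.mpr
          ⟨Finset.mem_insert_of_mem (Finset.mem_erase.mpr ⟨?_, hpω⟩), hP⟩
        rintro rfl
        exact absurd hP.1 (not_le.mpr haf)
    calc (ω.filter (fun p : ℕ × ℕ => f ≤ p.1 ∧ p.2 ≤ n)).card + 1
        = (insert (f, b) (ω.filter (fun p : ℕ × ℕ => f ≤ p.1 ∧ p.2 ≤ n))).card :=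
          (Finset.card_insert_of_notMem hnotmem).symm
      _ ≤ _ := Finset.card_le_card hsub
  have s1 := split ω hωlp
  have s2 := split σ hσlp
  omega

end LinkPatterns
end
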